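/- arXiv:1904.03044 — 8 statements merged into one kernel-verified Lean document; each statement's English description precedes it below -/
import Mathlib

section
/- Suppose the maps R^{(ij)} : ℂ → End(ℂ^d⊗ℂ^d) and K : ℂ → End(ℂ^d) satisfy the boundary Yang–Baxter equation for all u,v ∈ ℂ and the quasi-classical asymptotics with invertible leading term κ. Then κ satisfies the classical boundary Yang–Baxter constraints: C^{(11)}·(κ⊗κ) = (κ⊗κ)·C^{(22)} and (κ⊗1)·C^{(21)}·(1⊗κ) = (1⊗κ)·C^{(12)}·(κ⊗1). -/
/-!
Evaluate the boundary Yang–Baxter equation along `u = (t² + t)/2`, `v = ±(t² - t)/2`, so that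
`{u - v, u + v} = {t, t²}`, and let `t → ∞`. Every factor then has the form `A₀ + A₁/t + o(1/t)`:
the `R`-factor evaluated at `t` contributes its Casimir `C/t`, while the `R`-factor evaluated at
`t²` and the `K`-factors (whose arguments have size `t²`) are `o(1/t)`. Both sides equal
`κ ⊗ κ` at order zero, and comparing the `1/t` terms gives the two constraints, once the flipped
Casimirs are identified through `P C⁽ⁱʲ⁾ P = C⁽ʲⁱ⁾`, a consequence of the symmetry of the Killing
form.
-/

open Kronecker

attribute [local instance 100] LieRing.ofAssociativeRing

/-- The flip operator `P` on `ℂ^d ⊗ ℂ^d`, `P(x ⊗ y) = y ⊗ x`, as a matrix. -/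
def matFlip (d : ℕ) : Matrix (Fin d × Fin d) (Fin d × Fin d) ℂ :=
  fun p q => if p.1 = q.2 ∧ p.2 = q.1 then 1 else 0

/-- Entrywise big-O bound `‖f(u)‖ = O(g(‖u‖))` as `‖u‖ → ∞`. -/
def AsympO {m : Type*} (f : ℂ → Matrix m m ℂ) (g : ℝ → ℝ) : Prop :=
  ∃ c r : ℝ, ∀ u : ℂ, r ≤ ‖u‖ → ∀ p q, ‖f u p q‖ ≤ c * g ‖u‖

open Filter Topology

theorem Module.Basis.repr_apply_eq_of_dual {ι K V : Type*} [DecidableEq ι] [CommSemiring K]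
    [AddCommMonoid V] [Module K V] {B : LinearMap.BilinForm K V} (b : Module.Basis ι K V)
    {b' : ι → V} (hb' : ∀ i j, B (b i) (b' j) = if i = j then 1 else 0) (v : V) (i : ι) :
    b.repr v i = B v (b' i) := by
  have : (Finsupp.lapply i ∘ₗ b.repr.toLinearMap) = B.flip (b' i) :=
    b.ext fun j => by simp [hb', Finsupp.single_apply]
  exact LinearMap.congr_fun this v

theorem LinearMap.BilinForm.IsSymm.sum_apply_dual_comm {ι K V M : Type*} [Fintype ι]
    [DecidableEq ι] [CommSemiring K] [AddCommMonoid V] [Module K V] [AddCommMonoid M]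
    [Module K M] {B : LinearMap.BilinForm K V} (hB : B.IsSymm) (b : Module.Basis ι K V)
    {b' : ι → V} (hb' : ∀ i j, B (b i) (b' j) = if i = j then 1 else 0)
    (φ : V →ₗ[K] V →ₗ[K] M) :
    ∑ i, φ (b' i) (b i) = ∑ i, φ (b i) (b' i) := by
  obtain ⟨c, hc, hexp⟩ : ∃ c : ι → ι → K, (∀ i j, c i j = c j i) ∧ ∀ i, b' i = ∑ j, c i j • b j :=
    ⟨fun i j => B (b' i) (b' j), fun i j => hB.eq _ _, fun i => by
      conv_lhs => rw [← b.sum_repr (b' i)]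
      simp only [b.repr_apply_eq_of_dual hb']⟩
  calc ∑ i, φ (b' i) (b i)
      = ∑ i, ∑ j, c i j • φ (b j) (b i) := by
        refine Finset.sum_congr rfl fun i _ => ?_
        rw [hexp i, map_sum, LinearMap.sum_apply]
        simp only [map_smul, LinearMap.smul_apply]
    _ = ∑ j, ∑ i, c j i • φ (b j) (b i) := by
        rw [Finset.sum_comm]; simp only [hc]
    _ = ∑ j, φ (b j) (b' j) := by
        refine Finset.sum_congr rfl fun j _ => ?_
        rw [hexp j, map_sum]
        simp only [map_smul]

theorem Matrix.kronecker_one_mul_one_kronecker {l m n p R : Type*} [Fintype m] [Fintype n]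
    [DecidableEq m] [DecidableEq n] [CommSemiring R] (A : Matrix l m R) (B : Matrix n p R) :
    (A ⊗ₖ (1 : Matrix n n R)) * ((1 : Matrix m m R) ⊗ₖ B) = A ⊗ₖ B := by
  rw [← Matrix.mul_kronecker_mul, Matrix.mul_one, Matrix.one_mul]

theorem Matrix.one_kronecker_mul_kronecker_one {l m n p R : Type*} [Fintype l] [Fintype p]
    [DecidableEq l] [DecidableEq p] [CommSemiring R] (A : Matrix l m R) (B : Matrix n p R) :
    ((1 : Matrix l l R) ⊗ₖ B) * (A ⊗ₖ (1 : Matrix p p R)) = A ⊗ₖ B := by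
  rw [← Matrix.mul_kronecker_mul, Matrix.mul_one, Matrix.one_mul]

theorem matFlip_eq_toMatrix (d : ℕ) :
    matFlip d = (Equiv.prodComm (Fin d) (Fin d)).toPEquiv.toMatrix := by
  ext p q
  simp [matFlip, PEquiv.toMatrix_apply, Prod.ext_iff, eq_comm, and_comm]

theorem matFlip_mul_mul_matFlip {d : ℕ} (M : Matrix (Fin d × Fin d) (Fin d × Fin d) ℂ) :
    matFlip d * M * matFlip d = M.submatrix Prod.swap Prod.swap := by
  rw [matFlip_eq_toMatrix, PEquiv.toMatrix_toPEquiv_mul, PEquiv.mul_toMatrix_toPEquiv]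
  rfl

theorem matFlip_mul_matFlip (d : ℕ) : matFlip d * matFlip d = 1 := by
  simpa using (matFlip_mul_mul_matFlip 1).trans (Matrix.submatrix_one_equiv (Equiv.prodComm _ _))

theorem matFlip_mul_kronecker_mul_matFlip {d : ℕ} (X Y : Matrix (Fin d) (Fin d) ℂ) :
    matFlip d * (X ⊗ₖ Y) * matFlip d = Y ⊗ₖ X := by
  rw [matFlip_mul_mul_matFlip]
  ext p q
  simp [mul_comm]

theorem matFlip_mul_sum_kronecker_mul_matFlip {ι V : Type*} [Fintype ι] [DecidableEq ι]
    [AddCommMonoid V] [Module ℂ V] {B : LinearMap.BilinForm ℂ V} (hB : B.IsSymm)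
    (b : Module.Basis ι ℂ V) {b' : ι → V} (hb' : ∀ i j, B (b i) (b' j) = if i = j then 1 else 0)
    {d : ℕ} (ρ σ : V →ₗ[ℂ] Matrix (Fin d) (Fin d) ℂ) :
    matFlip d * (∑ i, ρ (b i) ⊗ₖ σ (b' i)) * matFlip d = ∑ i, σ (b i) ⊗ₖ ρ (b' i) := by
  simp only [Matrix.mul_sum, Matrix.sum_mul, matFlip_mul_kronecker_mul_matFlip]
  exact hB.sum_apply_dual_comm b hb' ((Matrix.kroneckerBilinear (R := ℂ)).compl₁₂ σ ρ)

section FirstOrder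

variable {M N : Type*} [AddCommGroup M] [Module ℝ M] [TopologicalSpace M]
  [AddCommGroup N] [Module ℝ N] [TopologicalSpace N]

def HasFirstOrderExpansion (f : ℝ → M) (a b : M) : Prop :=
  Tendsto (fun t : ℝ => t • (f t - a)) atTop (𝓝 b)

namespace HasFirstOrderExpansion

variable {f : ℝ → M} {a b : M}

theorem map (h : HasFirstOrderExpansion f a b) (Φ : M →ₗ[ℝ] N) (hΦ : Continuous Φ) :
    HasFirstOrderExpansion (fun t => Φ (f t)) (Φ a) (Φ b) := by
  simpa only [HasFirstOrderExpansion, Function.comp_def, map_sub, map_smul] using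
    (hΦ.tendsto b).comp h

variable [IsTopologicalAddGroup M] [ContinuousSMul ℝ M]

theorem tendsto (h : HasFirstOrderExpansion f a b) : Tendsto f atTop (𝓝 a) := by
  have hsub : Tendsto (fun t => f t - a) atTop (𝓝 0) := by
    have := tendsto_inv_atTop_zero.smul h
    rw [zero_smul] at this
    refine this.congr' ?_
    filter_upwards [eventually_ne_atTop 0] with t ht
    rw [inv_smul_smul₀ ht]
  simpa using hsub.add_const a

theorem unique [T2Space M] {a' b' : M} (h : HasFirstOrderExpansion f a b)
    (h' : HasFirstOrderExpansion f a' b') : a = a' ∧ b = b' := by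
  obtain rfl := tendsto_nhds_unique h.tendsto h'.tendsto
  exact ⟨rfl, tendsto_nhds_unique h h'⟩

end HasFirstOrderExpansion

theorem HasFirstOrderExpansion.mul {A : Type*} [Ring A] [TopologicalSpace A] [IsTopologicalRing A]
    [Algebra ℝ A] [ContinuousSMul ℝ A] {f g : ℝ → A} {a b a' b' : A}
    (hf : HasFirstOrderExpansion f a b) (hg : HasFirstOrderExpansion g a' b') :
    HasFirstOrderExpansion (fun t => f t * g t) (a * a') (b * a' + a * b') := by
  have key : ∀ t : ℝ, t • (f t * g t - a * a') = t • (f t - a) * g t + a * (t • (g t - a')) := by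
    intro t
    rw [smul_mul_assoc, mul_smul_comm, ← smul_add]
    noncomm_ring
  simpa only [HasFirstOrderExpansion, key] using
    (Tendsto.mul hf hg.tendsto).add (tendsto_const_nhds.mul hg)

end FirstOrder

section Kronecker

variable {l m n p : Type*} [Fintype l] [Fintype m]
  {f : ℝ → Matrix l m ℂ} {a b : Matrix l m ℂ}

theorem HasFirstOrderExpansion.kronecker_const (h : HasFirstOrderExpansion f a b)
    (N : Matrix n p ℂ) :
    HasFirstOrderExpansion (fun t => f t ⊗ₖ N) (a ⊗ₖ N) (b ⊗ₖ N) :=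
  h.map ((Matrix.kroneckerBilinear (R := ℝ)).flip N) (LinearMap.continuous_of_finiteDimensional _)

theorem HasFirstOrderExpansion.const_kronecker (h : HasFirstOrderExpansion f a b)
    (N : Matrix n p ℂ) :
    HasFirstOrderExpansion (fun t => N ⊗ₖ f t) (N ⊗ₖ a) (N ⊗ₖ b) :=
  h.map (Matrix.kroneckerBilinear (R := ℝ) N) (LinearMap.continuous_of_finiteDimensional _)

end Kronecker

theorem HasFirstOrderExpansion.matFlip_conj {d : ℕ}
    {f : ℝ → Matrix (Fin d × Fin d) (Fin d × Fin d) ℂ}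
    {a b : Matrix (Fin d × Fin d) (Fin d × Fin d) ℂ} (h : HasFirstOrderExpansion f a b) :
    HasFirstOrderExpansion (fun t => matFlip d * f t * matFlip d)
      (matFlip d * a * matFlip d) (matFlip d * b * matFlip d) :=
  h.map (LinearMap.mulRight ℝ (matFlip d) ∘ₗ LinearMap.mulLeft ℝ (matFlip d))
    (LinearMap.continuous_of_finiteDimensional _)

section Asymptotics

variable {m : Type*}

theorem AsympO.tendsto_smul_comp {f : ℂ → Matrix m m ℂ} {g : ℝ → ℝ} (h : AsympO f g)
    {φ : ℝ → ℂ} (hφ : Tendsto (fun t => ‖φ t‖) atTop atTop)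
    (hg : Tendsto (fun t => t * g ‖φ t‖) atTop (𝓝 0)) :
    Tendsto (fun t : ℝ => t • f (φ t)) atTop (𝓝 0) := by
  obtain ⟨c, r, hcr⟩ := h
  refine tendsto_pi_nhds.2 fun p => tendsto_pi_nhds.2 fun q => ?_
  refine squeeze_zero_norm' ?_ (by simpa using hg.const_mul c)
  filter_upwards [hφ.eventually_ge_atTop r, eventually_ge_atTop 0] with t hr ht
  calc ‖(t • f (φ t)) p q‖ = t * ‖f (φ t) p q‖ := by
        rw [Matrix.smul_apply, norm_smul, Real.norm_of_nonneg ht]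
    _ ≤ t * (c * g ‖φ t‖) := by gcongr; exact hcr _ hr p q
    _ = c * (t * g ‖φ t‖) := by ring

theorem tendsto_mul_inv_of_sq_le {ψ : ℝ → ℝ} {c : ℝ} (hc : 0 < c)
    (hψ : ∀ᶠ t in atTop, c * t ^ 2 ≤ ψ t) : Tendsto (fun t => t * (ψ t)⁻¹) atTop (𝓝 0) := by
  refine squeeze_zero' ?_ ?_ (by simpa using tendsto_inv_atTop_zero.const_mul c⁻¹)
  · filter_upwards [hψ, eventually_ge_atTop 0] with t h ht
    exact mul_nonneg ht (inv_nonneg.2 ((by positivity : 0 ≤ c * t ^ 2).trans h))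
  · filter_upwards [hψ, eventually_gt_atTop 0] with t h ht
    calc t * (ψ t)⁻¹ ≤ t * (c * t ^ 2)⁻¹ := by gcongr
      _ = c⁻¹ * t⁻¹ := by field_simp

theorem tendsto_atTop_of_sq_le {ψ : ℝ → ℝ} {c : ℝ} (hc : 0 < c)
    (hψ : ∀ᶠ t in atTop, c * t ^ 2 ≤ ψ t) : Tendsto ψ atTop atTop :=
  tendsto_atTop_mono' atTop hψ <|
    (tendsto_pow_atTop two_ne_zero).const_mul_atTop hc

theorem AsympO.hasFirstOrderExpansion_comp_of_sq_le {K : ℂ → Matrix m m ℂ} {κ : Matrix m m ℂ}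
    (hK : AsympO (fun u => K u - κ) fun t => t⁻¹) {φ : ℝ → ℂ} {c : ℝ} (hc : 0 < c)
    (hφ : ∀ᶠ t in atTop, c * t ^ 2 ≤ ‖φ t‖) :
    HasFirstOrderExpansion (fun t => K (φ t)) κ 0 :=
  hK.tendsto_smul_comp (tendsto_atTop_of_sq_le hc hφ) (tendsto_mul_inv_of_sq_le hc hφ)

theorem AsympO.hasFirstOrderExpansion_comp {R : ℂ → Matrix m m ℂ} {R₀ C : Matrix m m ℂ}
    (hR : AsympO (fun u => R u - R₀ - u⁻¹ • C) fun t => (t ^ 2)⁻¹) {φ : ℝ → ℂ} {α : ℂ}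
    (hφ : ∀ᶠ t in atTop, t ≤ ‖φ t‖) (hα : Tendsto (fun t : ℝ => t * (φ t)⁻¹) atTop (𝓝 α)) :
    HasFirstOrderExpansion (fun t => R (φ t)) R₀ (α • C) := by
  have hsq : ∀ᶠ t in atTop, 1 * t ^ 2 ≤ ‖φ t‖ ^ 2 := by
    filter_upwards [hφ, eventually_ge_atTop 0] with t h ht
    rw [one_mul]
    exact pow_le_pow_left₀ ht h 2
  have hrem := hR.tendsto_smul_comp (tendsto_atTop_mono' atTop hφ tendsto_id)
    (tendsto_mul_inv_of_sq_le one_pos hsq)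
  have key : ∀ t : ℝ, t • (R (φ t) - R₀ - (φ t)⁻¹ • C) + ((t : ℂ) * (φ t)⁻¹) • C =
      t • (R (φ t) - R₀) := fun t => by
    rw [smul_sub, ← Complex.coe_smul t ((φ t)⁻¹ • C), smul_smul, sub_add_cancel]
  simpa only [HasFirstOrderExpansion, key, zero_add] using hrem.add (hα.smul_const C)

theorem AsympO.hasFirstOrderExpansion_comp_ofReal {R : ℂ → Matrix m m ℂ} {R₀ C : Matrix m m ℂ}
    (hR : AsympO (fun u => R u - R₀ - u⁻¹ • C) fun t => (t ^ 2)⁻¹) :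
    HasFirstOrderExpansion (fun t : ℝ => R t) R₀ C := by
  refine one_smul ℂ C ▸ hR.hasFirstOrderExpansion_comp (.of_forall fun t => ?_) ?_
  · simpa using le_abs_self t
  · refine tendsto_const_nhds.congr' ?_
    filter_upwards [eventually_ne_atTop 0] with t ht
    rw [mul_inv_cancel₀ (Complex.ofReal_ne_zero.2 ht)]

theorem AsympO.hasFirstOrderExpansion_comp_ofReal_sq {R : ℂ → Matrix m m ℂ} {R₀ C : Matrix m m ℂ}
    (hR : AsympO (fun u => R u - R₀ - u⁻¹ • C) fun t => (t ^ 2)⁻¹) :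
    HasFirstOrderExpansion (fun t : ℝ => R ((t : ℂ) ^ 2)) R₀ 0 := by
  refine zero_smul ℂ C ▸ hR.hasFirstOrderExpansion_comp ?_ ?_
  · filter_upwards [eventually_ge_atTop 1] with t ht
    simpa [abs_of_nonneg (zero_le_one.trans ht)] using le_self_pow₀ ht two_ne_zero
  · have : Tendsto (fun t : ℝ => ((t⁻¹ : ℝ) : ℂ)) atTop (𝓝 (((0 : ℝ)) : ℂ)) :=
      (Complex.continuous_ofReal.tendsto 0).comp tendsto_inv_atTop_zero
    rw [Complex.ofReal_zero] at this
    refine this.congr' ?_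
    filter_upwards [eventually_ne_atTop 0] with t ht
    push_cast
    field_simp

end Asymptotics

theorem eventually_sq_le_norm_half {σ τ : ℂ} (hσ : ‖σ‖ = 1) (hτ : ‖τ‖ ≤ 1) :
    ∀ᶠ t : ℝ in atTop, 4⁻¹ * t ^ 2 ≤ ‖(σ * (t : ℂ) ^ 2 + τ * t) / 2‖ := by
  filter_upwards [eventually_ge_atTop 2] with t ht
  have h₁ : ‖σ * (t : ℂ) ^ 2‖ = t ^ 2 := by simp [hσ]
  have h₂ : ‖τ * (t : ℂ)‖ ≤ t := by
    rw [norm_mul, Complex.norm_real, Real.norm_of_nonneg (by linarith)]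
    exact mul_le_of_le_one_left (by linarith) hτ
  have := norm_sub_norm_le (σ * (t : ℂ) ^ 2) (-(τ * t))
  rw [sub_neg_eq_add, norm_neg, h₁] at this
  rw [norm_div, Complex.norm_ofNat]
  nlinarith

theorem linearized_bYBE {d : ℕ} {R₀₀ R₀₁ R₁₁ : ℝ → Matrix (Fin d × Fin d) (Fin d × Fin d) ℂ}
    {Kᵤ Kᵥ : ℝ → Matrix (Fin d) (Fin d) ℂ} {κ : Matrix (Fin d) (Fin d) ℂ}
    {a₀₀ a₀₁ a₁₁ : Matrix (Fin d × Fin d) (Fin d × Fin d) ℂ}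
    (h₀₀ : HasFirstOrderExpansion R₀₀ 1 a₀₀) (h₀₁ : HasFirstOrderExpansion R₀₁ 1 a₀₁)
    (h₁₁ : HasFirstOrderExpansion R₁₁ 1 a₁₁) (hu : HasFirstOrderExpansion Kᵤ κ 0)
    (hv : HasFirstOrderExpansion Kᵥ κ 0)
    (hYB : ∀ t, R₀₀ t * (Kᵤ t ⊗ₖ 1) * (matFlip d * R₀₁ t * matFlip d) * (1 ⊗ₖ Kᵥ t) =
      (1 ⊗ₖ Kᵥ t) * R₀₁ t * (Kᵤ t ⊗ₖ 1) * (matFlip d * R₁₁ t * matFlip d)) :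
    a₀₀ * (κ ⊗ₖ κ) + (κ ⊗ₖ 1) * (matFlip d * a₀₁ * matFlip d) * (1 ⊗ₖ κ) =
      (1 ⊗ₖ κ) * a₀₁ * (κ ⊗ₖ 1) + (κ ⊗ₖ κ) * (matFlip d * a₁₁ * matFlip d) := by
  have hL := ((h₀₀.mul (hu.kronecker_const 1)).mul h₀₁.matFlip_conj).mul (hv.const_kronecker 1)
  have hR := (((hv.const_kronecker (1 : Matrix (Fin d) (Fin d) ℂ)).mul h₀₁).mul
    (hu.kronecker_const 1)).mul h₁₁.matFlip_conj
  rw [show (fun t => R₀₀ t * (Kᵤ t ⊗ₖ 1) * (matFlip d * R₀₁ t * matFlip d) * (1 ⊗ₖ Kᵥ t)) = _ from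
    funext hYB] at hL
  have := (hL.unique hR).2
  simp only [Matrix.zero_kronecker, Matrix.kronecker_zero, mul_zero, mul_one, one_mul,
    add_zero, zero_add, matFlip_mul_matFlip] at this
  rwa [add_mul, mul_assoc a₀₀, Matrix.kronecker_one_mul_one_kronecker,
    Matrix.one_kronecker_mul_kronecker_one] at this

theorem stmt_1_general {L : Type*} [LieRing L] [LieAlgebra ℂ L]
    {d : ℕ} (ρ : Fin 2 → L →ₗ⁅ℂ⁆ Matrix (Fin d) (Fin d) ℂ)
    {ι : Type*} [Fintype ι] [DecidableEq ι] (Xb : Module.Basis ι ℂ L) (Xd : ι → L)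
    (hdual : ∀ A B : ι, killingForm ℂ L (Xb A) (Xd B) = if A = B then 1 else 0)
    (C : Fin 2 → Fin 2 → Matrix (Fin d × Fin d) (Fin d × Fin d) ℂ)
    (hC : ∀ i j, C i j = ∑ A : ι, (ρ i) (Xb A) ⊗ₖ (ρ j) (Xd A))
    (R : Fin 2 → Fin 2 → ℂ → Matrix (Fin d × Fin d) (Fin d × Fin d) ℂ)
    (K : ℂ → Matrix (Fin d) (Fin d) ℂ)
    (κ : Matrix (Fin d) (Fin d) ℂ)
    (hRasymp : ∀ i j, AsympO (fun u => R i j u - 1 - u⁻¹ • C i j) (fun t => (t ^ 2)⁻¹))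
    (hKasymp : AsympO (fun u => K u - κ) (fun t => t⁻¹))
    (hbYBE : ∀ u v : ℂ,
      R 0 0 (u - v) * (K u ⊗ₖ (1 : Matrix (Fin d) (Fin d) ℂ)) *
          (matFlip d * R 0 1 (u + v) * matFlip d) * ((1 : Matrix (Fin d) (Fin d) ℂ) ⊗ₖ K v) =
        ((1 : Matrix (Fin d) (Fin d) ℂ) ⊗ₖ K v) * R 0 1 (u + v) *
          (K u ⊗ₖ (1 : Matrix (Fin d) (Fin d) ℂ)) * (matFlip d * R 1 1 (u - v) * matFlip d)) :
    C 0 0 * (κ ⊗ₖ κ) = (κ ⊗ₖ κ) * C 1 1 ∧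
      (κ ⊗ₖ (1 : Matrix (Fin d) (Fin d) ℂ)) * C 1 0 * ((1 : Matrix (Fin d) (Fin d) ℂ) ⊗ₖ κ) =
        ((1 : Matrix (Fin d) (Fin d) ℂ) ⊗ₖ κ) * C 0 1 * (κ ⊗ₖ (1 : Matrix (Fin d) (Fin d) ℂ)) := by
  have hflip (i j : Fin 2) : matFlip d * C i j * matFlip d = C j i := by
    have := matFlip_mul_sum_kronecker_mul_matFlip ⟨LieModule.traceForm_comm ℂ L L⟩ Xb hdual
      (ρ i).toLinearMap (ρ j).toLinearMap
    simpa only [LieHom.coe_toLinearMap, ← hC] using this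
  have hK (σ τ : ℂ) (hσ : ‖σ‖ = 1) (hτ : ‖τ‖ ≤ 1) :
      HasFirstOrderExpansion (fun t : ℝ => K ((σ * (t : ℂ) ^ 2 + τ * t) / 2)) κ 0 :=
    hKasymp.hasFirstOrderExpansion_comp_of_sq_le (by norm_num) (eventually_sq_le_norm_half hσ hτ)
  constructor
  · have := linearized_bYBE (hRasymp 0 0).hasFirstOrderExpansion_comp_ofReal
      (hRasymp 0 1).hasFirstOrderExpansion_comp_ofReal_sq
      (hRasymp 1 1).hasFirstOrderExpansion_comp_ofReal (hK 1 1 (by simp) (by simp))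
      (hK 1 (-1) (by simp) (by simp)) fun t => by
        have := hbYBE ((1 * (t : ℂ) ^ 2 + 1 * t) / 2) ((1 * (t : ℂ) ^ 2 + -1 * t) / 2)
        rwa [show (1 * (t : ℂ) ^ 2 + 1 * t) / 2 - (1 * (t : ℂ) ^ 2 + -1 * t) / 2 = t by ring,
          show (1 * (t : ℂ) ^ 2 + 1 * t) / 2 + (1 * (t : ℂ) ^ 2 + -1 * t) / 2 = t ^ 2 by ring]
          at this
    simpa only [hflip, mul_zero, zero_mul, add_zero, zero_add] using this
  · have := linearized_bYBE (hRasymp 0 0).hasFirstOrderExpansion_comp_ofReal_sq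
      (hRasymp 0 1).hasFirstOrderExpansion_comp_ofReal
      (hRasymp 1 1).hasFirstOrderExpansion_comp_ofReal_sq (hK 1 1 (by simp) (by simp))
      (hK (-1) 1 (by simp) (by simp)) fun t => by
        have := hbYBE ((1 * (t : ℂ) ^ 2 + 1 * t) / 2) ((-1 * (t : ℂ) ^ 2 + 1 * t) / 2)
        rwa [show (1 * (t : ℂ) ^ 2 + 1 * t) / 2 - (-1 * (t : ℂ) ^ 2 + 1 * t) / 2 = t ^ 2 by ring,
          show (1 * (t : ℂ) ^ 2 + 1 * t) / 2 + (-1 * (t : ℂ) ^ 2 + 1 * t) / 2 = t by ring]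
          at this
    simpa only [hflip, mul_zero, zero_mul, add_zero, zero_add] using this

/-- if `R^{(ij)}` and `K` satisfy the boundary Yang–Baxter equation and the
quasi-classical asymptotics with invertible leading term `κ`, then `κ` satisfies the two
classical boundary Yang–Baxter constraints. -/
theorem stmt_1 {L : Type*} [LieRing L] [LieAlgebra ℂ L] [FiniteDimensional ℂ L]
    [LieAlgebra.IsSimple ℂ L]
    (hB : LinearMap.BilinForm.Nondegenerate (killingForm ℂ L))
    {d : ℕ} (ρ : Fin 2 → L →ₗ⁅ℂ⁆ Matrix (Fin d) (Fin d) ℂ)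
    (hρ : ∀ i, Function.Injective (ρ i))
    {ι : Type*} [Fintype ι] [DecidableEq ι] (Xb : Module.Basis ι ℂ L) (Xd : ι → L)
    (hdual : ∀ A B : ι, killingForm ℂ L (Xb A) (Xd B) = if A = B then 1 else 0)
    (C : Fin 2 → Fin 2 → Matrix (Fin d × Fin d) (Fin d × Fin d) ℂ)
    (hC : ∀ i j, C i j = ∑ A : ι, (ρ i) (Xb A) ⊗ₖ (ρ j) (Xd A))
    (R : Fin 2 → Fin 2 → ℂ → Matrix (Fin d × Fin d) (Fin d × Fin d) ℂ)
    (K : ℂ → Matrix (Fin d) (Fin d) ℂ)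
    (κ : Matrix (Fin d) (Fin d) ℂ) (hκ : IsUnit κ)
    (hRasymp : ∀ i j, AsympO (fun u => R i j u - 1 - u⁻¹ • C i j) (fun t => (t ^ 2)⁻¹))
    (hKasymp : AsympO (fun u => K u - κ) (fun t => t⁻¹))
    (hbYBE : ∀ u v : ℂ,
      R 0 0 (u - v) * (K u ⊗ₖ (1 : Matrix (Fin d) (Fin d) ℂ)) *
          (matFlip d * R 0 1 (u + v) * matFlip d) * ((1 : Matrix (Fin d) (Fin d) ℂ) ⊗ₖ K v) =
        ((1 : Matrix (Fin d) (Fin d) ℂ) ⊗ₖ K v) * R 0 1 (u + v) *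
          (K u ⊗ₖ (1 : Matrix (Fin d) (Fin d) ℂ)) * (matFlip d * R 1 1 (u - v) * matFlip d)) :
    C 0 0 * (κ ⊗ₖ κ) = (κ ⊗ₖ κ) * C 1 1 ∧
      (κ ⊗ₖ (1 : Matrix (Fin d) (Fin d) ℂ)) * C 1 0 * ((1 : Matrix (Fin d) (Fin d) ℂ) ⊗ₖ κ) =
        ((1 : Matrix (Fin d) (Fin d) ℂ) ⊗ₖ κ) * C 0 1 * (κ ⊗ₖ (1 : Matrix (Fin d) (Fin d) ℂ)) :=
  stmt_1_general ρ Xb Xd hdual C hC R K κ hRasymp hKasymp hbYBE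
end

section
/- Suppose κ ∈ End(ℂ^d) is invertible and satisfies C^{(11)}·(κ⊗κ) = (κ⊗κ)·C^{(22)}. Then for every X ∈ 𝔤 one has κ·ρ⁽²⁾(X)·κ⁻¹ ∈ ρ⁽¹⁾(𝔤); consequently the map Ad_κ : Y ↦ κYκ⁻¹ restricts to a linear bijection from ρ⁽²⁾(𝔤) onto ρ⁽¹⁾(𝔤). -/
open Kronecker

attribute [local instance 100] LieRing.ofAssociativeRing

/-!
Conjugating the intertwining relation by `κ ⊗ κ` shows that the split Casimir of `ρ⁽¹⁾` equals
the split Casimir of the conjugated representation `κ ρ⁽²⁾(·) κ⁻¹`. Contracting a split Casimir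
`C = Σ ρ(X_A) ⊗ ρ(X^A)` in its second factor against any matrix `N` gives an element
`Σ Tr(ρ(X^A) N) ρ(X_A)` of `ρ(𝔤)`, while contracting it against `ρ(X)` gives `c ρ(X)` when the
trace form of `ρ` is `c B`. Hence `κ ρ⁽²⁾(X) κ⁻¹ ∈ ρ⁽¹⁾(𝔤)`; by symmetry (with `κ⁻¹`) also
`κ⁻¹ ρ⁽¹⁾(X) κ ∈ ρ⁽²⁾(𝔤)`, so conjugation by `κ` is a bijection between the two images.
-/

section PartialTrace

variable {R : Type*} [CommRing R] {m n : Type*} [Fintype n]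

/-- `partialTraceRight N M` is the partial trace `Tr₂ (M * (1 ⊗ N))` over the second factor. -/
def partialTraceRight (N : Matrix n n R) : Matrix (m × n) (m × n) R →ₗ[R] Matrix m m R where
  toFun M := Matrix.of fun i j => ∑ k, ∑ l, M (i, k) (j, l) * N l k
  map_add' M M' := by
    ext i j
    simp only [Matrix.add_apply, add_mul, Finset.sum_add_distrib, Matrix.of_apply]
  map_smul' r M := by
    ext i j
    simp only [Matrix.smul_apply, smul_eq_mul, mul_assoc, ← Finset.mul_sum, Matrix.of_apply,
      RingHom.id_apply]

theorem partialTraceRight_kronecker (N : Matrix n n R) (A : Matrix m m R) (B : Matrix n n R) :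
    partialTraceRight N (A ⊗ₖ B) = (B * N).trace • A := by
  ext i j
  simp only [partialTraceRight, LinearMap.coe_mk, AddHom.coe_mk, Matrix.of_apply,
    Matrix.kroneckerMap_apply, Matrix.smul_apply, smul_eq_mul, Matrix.trace, Matrix.diag,
    Matrix.mul_apply, Finset.sum_mul, mul_assoc]
  exact Finset.sum_congr rfl fun _ _ => Finset.sum_congr rfl fun _ _ => by ring

end PartialTrace

theorem Module.Basis.sum_bilin_smul_of_dual {K M ι : Type*} [CommRing K] [AddCommGroup M]
    [Module K M] [Fintype ι] [DecidableEq ι] (b : Module.Basis ι K M) (B : LinearMap.BilinForm K M)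
    (e : ι → M) (hdual : ∀ i j, B (b i) (e j) = if i = j then 1 else 0) (x : M) :
    ∑ i, B x (e i) • b i = x := by
  have hcoord : ∀ i, B x (e i) = b.repr x i := by
    intro i
    have : B.flip (e i) = Finsupp.lapply i ∘ₗ b.repr.toLinearMap :=
      b.ext fun j => by simp [hdual, Finsupp.single_apply]
    exact LinearMap.congr_fun this x
  simp_rw [hcoord]
  exact b.sum_repr x

section SplitCasimir

variable {K : Type*} [Field K] {L : Type*} [AddCommGroup L] [Module K L]
  {n : Type*} [Fintype n] {ι : Type*} [Fintype ι]

def splitCasimir (ρ : L →ₗ[K] Matrix n n K) (b e : ι → L) : Matrix (n × n) (n × n) K :=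
  ∑ i, ρ (b i) ⊗ₖ ρ (e i)

theorem partialTraceRight_splitCasimir (ρ : L →ₗ[K] Matrix n n K) (b e : ι → L)
    (N : Matrix n n K) :
    partialTraceRight N (splitCasimir ρ b e) = ρ (∑ i, (ρ (e i) * N).trace • b i) := by
  simp only [splitCasimir, map_sum, map_smul, partialTraceRight_kronecker]

variable [DecidableEq ι]

theorem partialTraceRight_splitCasimir_self (ρ : L →ₗ[K] Matrix n n K)
    (B : LinearMap.BilinForm K L) (b : Module.Basis ι K L) (e : ι → L)
    (hdual : ∀ i j, B (b i) (e j) = if i = j then 1 else 0) (c : K)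
    (htr : ∀ X Y, (ρ X * ρ Y).trace = c * B X Y) (X : L) :
    partialTraceRight (ρ X) (splitCasimir ρ b e) = c • ρ X := by
  have hcoeff : ∀ i, (ρ (e i) * ρ X).trace = c * B X (e i) := fun i => by
    rw [Matrix.trace_mul_comm, htr]
  simp only [partialTraceRight_splitCasimir, hcoeff, mul_smul, ← Finset.smul_sum,
    b.sum_bilin_smul_of_dual B e hdual, map_smul]

theorem range_le_range_of_splitCasimir_eq (ρ₁ ρ : L →ₗ[K] Matrix n n K)
    (B : LinearMap.BilinForm K L) (b : Module.Basis ι K L) (e : ι → L)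
    (hdual : ∀ i j, B (b i) (e j) = if i = j then 1 else 0) (c : K) (hc : c ≠ 0)
    (htr : ∀ X Y, (ρ X * ρ Y).trace = c * B X Y) (h : splitCasimir ρ₁ b e = splitCasimir ρ b e) :
    LinearMap.range ρ ≤ LinearMap.range ρ₁ := by
  rintro _ ⟨X, rfl⟩
  have hX : ρ X = c⁻¹ • partialTraceRight (ρ X) (splitCasimir ρ₁ b e) := by
    rw [h, partialTraceRight_splitCasimir_self ρ B b e hdual c htr, inv_smul_smul₀ hc]
  rw [hX, partialTraceRight_splitCasimir]
  exact Submodule.smul_mem _ _ (LinearMap.mem_range_self _ _)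

end SplitCasimir

section Conjugation

variable {K : Type*} [Field K] {L : Type*} [AddCommGroup L] [Module K L]
  {n : Type*} [Fintype n] [DecidableEq n] {ι : Type*} [Fintype ι]

noncomputable def conjRep (κ : Matrix n n K) (ρ : L →ₗ[K] Matrix n n K) : L →ₗ[K] Matrix n n K :=
  LinearMap.mulLeftRight K (κ, κ⁻¹) ∘ₗ ρ

theorem conjRep_apply (κ : Matrix n n K) (ρ : L →ₗ[K] Matrix n n K) (X : L) :
    conjRep κ ρ X = κ * ρ X * κ⁻¹ :=
  rfl

theorem splitCasimir_conjRep (κ : Matrix n n K) (ρ : L →ₗ[K] Matrix n n K) (b e : ι → L) :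
    splitCasimir (conjRep κ ρ) b e = (κ ⊗ₖ κ) * splitCasimir ρ b e * (κ⁻¹ ⊗ₖ κ⁻¹) := by
  simp only [splitCasimir, conjRep_apply, Finset.mul_sum, Finset.sum_mul,
    Matrix.mul_kronecker_mul]

theorem trace_conjRep_mul (κ : Matrix n n K) (hκ : IsUnit κ) (ρ : L →ₗ[K] Matrix n n K)
    (X Y : L) : (conjRep κ ρ X * conjRep κ ρ Y).trace = (ρ X * ρ Y).trace := by
  have hκ' := (Matrix.isUnit_iff_isUnit_det κ).mp hκ
  have hconj : κ * ρ X * κ⁻¹ * (κ * ρ Y * κ⁻¹) = κ * (ρ X * ρ Y) * κ⁻¹ := by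
    simp only [Matrix.mul_assoc, Matrix.nonsing_inv_mul_cancel_left (h := hκ')]
  rw [conjRep_apply, conjRep_apply, hconj, Matrix.trace_mul_cycle, Matrix.nonsing_inv_mul _ hκ',
    Matrix.one_mul]

theorem splitCasimir_eq_conjRep_of_mul_eq (ρ₁ ρ₂ : L →ₗ[K] Matrix n n K) (b e : ι → L)
    (κ : Matrix n n K) (hκ : IsUnit κ)
    (h : splitCasimir ρ₁ b e * (κ ⊗ₖ κ) = (κ ⊗ₖ κ) * splitCasimir ρ₂ b e) :
    splitCasimir ρ₁ b e = splitCasimir (conjRep κ ρ₂) b e := by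
  have hκ' := (Matrix.isUnit_iff_isUnit_det κ).mp hκ
  rw [splitCasimir_conjRep, ← h, Matrix.mul_assoc, ← Matrix.mul_kronecker_mul,
    Matrix.mul_nonsing_inv _ hκ', Matrix.one_kronecker_one, Matrix.mul_one]

theorem nonsing_inv_mul_eq_of_mul_eq {P Q A : Matrix n n K} (hA : IsUnit A) (h : P * A = A * Q) :
    A⁻¹ * P = Q * A⁻¹ := by
  have hA' := (Matrix.isUnit_iff_isUnit_det A).mp hA
  calc A⁻¹ * P = A⁻¹ * (P * A) * A⁻¹ := by
        rw [Matrix.mul_assoc, Matrix.mul_assoc, Matrix.mul_nonsing_inv _ hA', Matrix.mul_one]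
    _ = Q * A⁻¹ := by rw [h, ← Matrix.mul_assoc, Matrix.nonsing_inv_mul _ hA', Matrix.one_mul]

variable [DecidableEq ι]

theorem conj_mem_range_of_splitCasimir_mul_eq (ρ₁ ρ₂ : L →ₗ[K] Matrix n n K)
    (B : LinearMap.BilinForm K L) (b : Module.Basis ι K L) (e : ι → L)
    (hdual : ∀ i j, B (b i) (e j) = if i = j then 1 else 0) (c : K) (hc : c ≠ 0)
    (htr : ∀ X Y, (ρ₂ X * ρ₂ Y).trace = c * B X Y) (κ : Matrix n n K) (hκ : IsUnit κ)
    (h : splitCasimir ρ₁ b e * (κ ⊗ₖ κ) = (κ ⊗ₖ κ) * splitCasimir ρ₂ b e) (X : L) :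
    κ * ρ₂ X * κ⁻¹ ∈ Set.range ρ₁ :=
  range_le_range_of_splitCasimir_eq ρ₁ (conjRep κ ρ₂) B b e hdual c hc
    (fun X Y => by rw [trace_conjRep_mul κ hκ, htr])
    (splitCasimir_eq_conjRep_of_mul_eq ρ₁ ρ₂ b e κ hκ h) (LinearMap.mem_range_self _ X)

end Conjugation

theorem stmt_2_general {L : Type*} [LieRing L] [LieAlgebra ℂ L]
    {d : ℕ} (ρ₁ ρ₂ : L →ₗ⁅ℂ⁆ Matrix (Fin d) (Fin d) ℂ)
    (c₁ c₂ : ℂ) (hc₁ : c₁ ≠ 0) (hc₂ : c₂ ≠ 0)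
    (htr₁ : ∀ X Y : L, Matrix.trace (ρ₁ X * ρ₁ Y) = c₁ * killingForm ℂ L X Y)
    (htr₂ : ∀ X Y : L, Matrix.trace (ρ₂ X * ρ₂ Y) = c₂ * killingForm ℂ L X Y)
    {ι : Type*} [Fintype ι] [DecidableEq ι] (Xb : Module.Basis ι ℂ L) (Xd : ι → L)
    (hdual : ∀ A B : ι, killingForm ℂ L (Xb A) (Xd B) = if A = B then 1 else 0)
    (κ : Matrix (Fin d) (Fin d) ℂ) (hκ : IsUnit κ)
    (hcbYBE : (∑ A : ι, ρ₁ (Xb A) ⊗ₖ ρ₁ (Xd A)) * (κ ⊗ₖ κ) =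
        (κ ⊗ₖ κ) * (∑ A : ι, ρ₂ (Xb A) ⊗ₖ ρ₂ (Xd A))) :
    (∀ X : L, ∃ Y : L, ρ₁ Y = κ * ρ₂ X * κ⁻¹) ∧
      Set.BijOn (fun M => κ * M * κ⁻¹) (Set.range ρ₂) (Set.range ρ₁) := by
  have hκ' := (Matrix.isUnit_iff_isUnit_det κ).mp hκ
  have hfwd : ∀ X, κ * ρ₂ X * κ⁻¹ ∈ Set.range ρ₁ :=
    conj_mem_range_of_splitCasimir_mul_eq ρ₁.toLinearMap ρ₂.toLinearMap (killingForm ℂ L) Xb Xd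
      hdual c₂ hc₂ htr₂ κ hκ hcbYBE
  have hcbYBE_inv : (∑ A : ι, ρ₂ (Xb A) ⊗ₖ ρ₂ (Xd A)) * (κ⁻¹ ⊗ₖ κ⁻¹) =
      (κ⁻¹ ⊗ₖ κ⁻¹) * (∑ A : ι, ρ₁ (Xb A) ⊗ₖ ρ₁ (Xd A)) := by
    rw [← Matrix.inv_kronecker]
    exact (nonsing_inv_mul_eq_of_mul_eq (Matrix.IsUnit.kronecker hκ hκ) hcbYBE).symm
  have hbwd : ∀ X, κ⁻¹ * ρ₁ X * κ ∈ Set.range ρ₂ := by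
    simpa only [Matrix.nonsing_inv_nonsing_inv κ hκ', LieHom.coe_toLinearMap] using
      conj_mem_range_of_splitCasimir_mul_eq ρ₂.toLinearMap ρ₁.toLinearMap (killingForm ℂ L) Xb Xd
        hdual c₁ hc₁ htr₁ κ⁻¹ (Matrix.isUnit_nonsing_inv_iff.mpr hκ) hcbYBE_inv
  refine ⟨hfwd, Set.InvOn.bijOn (f' := fun M => κ⁻¹ * M * κ) ⟨?_, ?_⟩ ?_ ?_⟩
  · intro M _
    simp only [← Matrix.mul_assoc, Matrix.nonsing_inv_mul _ hκ', Matrix.one_mul,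
      Matrix.nonsing_inv_mul_cancel_right _ _ hκ']
  · intro M _
    simp only [← Matrix.mul_assoc, Matrix.mul_nonsing_inv _ hκ', Matrix.one_mul,
      Matrix.mul_nonsing_inv_cancel_right _ _ hκ']
  · rintro _ ⟨X, rfl⟩
    exact hfwd X
  · rintro _ ⟨X, rfl⟩
    exact hbwd X

/-- if `κ` is invertible and `C^{(11)}(κ⊗κ) = (κ⊗κ)C^{(22)}`, then
`κρ⁽²⁾(X)κ⁻¹ ∈ ρ⁽¹⁾(𝔤)` for all `X`, and `Ad_κ` restricts to a bijection from `ρ⁽²⁾(𝔤)`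
onto `ρ⁽¹⁾(𝔤)`. -/
theorem stmt_2 {L : Type*} [LieRing L] [LieAlgebra ℂ L] [FiniteDimensional ℂ L]
    [LieAlgebra.IsSimple ℂ L]
    (hB : LinearMap.BilinForm.Nondegenerate (killingForm ℂ L))
    {d : ℕ} (ρ₁ ρ₂ : L →ₗ⁅ℂ⁆ Matrix (Fin d) (Fin d) ℂ)
    (hρ₁ : Function.Injective ρ₁) (hρ₂ : Function.Injective ρ₂)
    (c₁ c₂ : ℂ) (hc₁ : c₁ ≠ 0) (hc₂ : c₂ ≠ 0)
    (htr₁ : ∀ X Y : L, Matrix.trace (ρ₁ X * ρ₁ Y) = c₁ * killingForm ℂ L X Y)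
    (htr₂ : ∀ X Y : L, Matrix.trace (ρ₂ X * ρ₂ Y) = c₂ * killingForm ℂ L X Y)
    {ι : Type*} [Fintype ι] [DecidableEq ι] (Xb : Module.Basis ι ℂ L) (Xd : ι → L)
    (hdual : ∀ A B : ι, killingForm ℂ L (Xb A) (Xd B) = if A = B then 1 else 0)
    (κ : Matrix (Fin d) (Fin d) ℂ) (hκ : IsUnit κ)
    (hcbYBE : (∑ A : ι, ρ₁ (Xb A) ⊗ₖ ρ₁ (Xd A)) * (κ ⊗ₖ κ) =
        (κ ⊗ₖ κ) * (∑ A : ι, ρ₂ (Xb A) ⊗ₖ ρ₂ (Xd A))) :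
    (∀ X : L, ∃ Y : L, ρ₁ Y = κ * ρ₂ X * κ⁻¹) ∧
      Set.BijOn (fun M => κ * M * κ⁻¹) (Set.range ρ₂) (Set.range ρ₁) :=
  stmt_2_general ρ₁ ρ₂ c₁ c₂ hc₁ hc₂ htr₁ htr₂ Xb Xd hdual κ hκ hcbYBE
end

section
/- Suppose κ ∈ End(ℂ^d) is invertible and satisfies C^{(11)}·(κ⊗κ) = (κ⊗κ)·C^{(22)}. Then the map α := (ρ⁽¹⁾)⁻¹ ∘ Ad_κ ∘ ρ⁽²⁾ : 𝔤 → 𝔤 (well-defined since Ad_κ maps ρ⁽²⁾(𝔤) into ρ⁽¹⁾(𝔤) and ρ⁽¹⁾ is injective) is a linear bijection of 𝔤 that preserves the Killing form: B(α(X), α(Y)) = B(X, Y) for all X, Y ∈ 𝔤. -/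
/-!
Conjugating the intertwining relation by `κ ⊗ κ` shows that the Casimir tensor of `ρ⁽¹⁾` equals
that of `φ := Ad_κ ∘ ρ⁽²⁾`. Multiplying both by `1 ⊗ φ(Y)` and taking the partial trace over the
second factor gives an element of `ρ⁽¹⁾(𝔤)` on one side and, since the trace form of `φ` is
`c⁽²⁾ B`, the matrix `c⁽²⁾ φ(Y)` on the other. Hence `φ(𝔤) ⊆ ρ⁽¹⁾(𝔤)`, so `α = (ρ⁽¹⁾)⁻¹ ∘ φ` is an
injective Lie algebra endomorphism of the finite-dimensional `𝔤`, i.e. a Lie automorphism, and Lie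
automorphisms preserve the Killing form.
-/

open Kronecker

attribute [local instance 100] LieRing.ofAssociativeRing

namespace Matrix

variable {R m n ι : Type*} [Fintype n] [Fintype ι]

section CommSemiring

variable [CommSemiring R]

def traceRight : Matrix (m × n) (m × n) R →ₗ[R] Matrix m m R where
  toFun M := of fun i k => ∑ j, M (i, j) (k, j)
  map_add' M N := by ext; simp [Finset.sum_add_distrib]
  map_smul' c M := by ext; simp [Finset.mul_sum]

theorem traceRight_kronecker (A : Matrix m m R) (B : Matrix n n R) :
    traceRight (A ⊗ₖ B) = B.trace • A := by
  ext i k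
  simp [traceRight, trace, Finset.mul_sum, mul_comm]

theorem traceRight_sum_kronecker_mul [Fintype m] [DecidableEq m] (M : ι → Matrix m m R)
    (N : ι → Matrix n n R) (P : Matrix n n R) :
    traceRight ((∑ a, M a ⊗ₖ N a) * ((1 : Matrix m m R) ⊗ₖ P)) = ∑ a, (N a * P).trace • M a := by
  simp [Finset.sum_mul, ← mul_kronecker_mul, traceRight_kronecker]

theorem kronecker_mul_sum_kronecker_mul (P Q : Matrix n n R) (M N : ι → Matrix n n R) :
    (P ⊗ₖ P) * (∑ a, M a ⊗ₖ N a) * (Q ⊗ₖ Q) = ∑ a, (P * M a * Q) ⊗ₖ (P * N a * Q) := by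
  simp [Finset.mul_sum, Finset.sum_mul, ← mul_kronecker_mul]

end CommSemiring

theorem eq_kronecker_mul_inv_of_mul_eq [CommRing R] [DecidableEq n] (P : Matrix n n R)
    [Invertible P] {C₁ C₂ : Matrix (n × n) (n × n) R} (h : C₁ * (P ⊗ₖ P) = (P ⊗ₖ P) * C₂) :
    C₁ = (P ⊗ₖ P) * C₂ * (P⁻¹ ⊗ₖ P⁻¹) := by
  rw [← h, mul_assoc, ← mul_kronecker_mul, mul_inv_of_invertible, one_kronecker_one, mul_one]

end Matrix

theorem Module.Basis.sum_apply_dual_smul {R M ι : Type*} [CommSemiring R] [AddCommMonoid M]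
    [Module R M] [Fintype ι] [DecidableEq ι] (B : M →ₗ[R] M →ₗ[R] R) (b : Basis ι R M)
    (d : ι → M) (hdual : ∀ i j, B (b i) (d j) = if i = j then 1 else 0) (x : M) :
    ∑ i, B x (d i) • b i = x := by
  have hcoord : ∀ i, B x (d i) = b.repr x i := fun i => by
    conv_lhs => rw [← b.sum_repr x]
    simp only [map_sum, map_smul, LinearMap.sum_apply, LinearMap.smul_apply, hdual, smul_eq_mul,
      mul_ite, mul_one, mul_zero, Finset.sum_ite_eq', Finset.mem_univ, if_true]
  simp only [hcoord, b.sum_repr]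

open Matrix in
theorem range_le_range_of_sum_kronecker_eq {K L ι n : Type*} [Field K] [AddCommGroup L]
    [Module K L] [Fintype ι] [DecidableEq ι] [Fintype n] [DecidableEq n]
    (ρ φ : L →ₗ[K] Matrix n n K) (B : L →ₗ[K] L →ₗ[K] K) (b : Module.Basis ι K L) (d : ι → L)
    (hdual : ∀ i j, B (b i) (d j) = if i = j then 1 else 0) {c : K} (hc : c ≠ 0)
    (htr : ∀ X Y, trace (φ X * φ Y) = c * B X Y)
    (hcas : ∑ a, ρ (b a) ⊗ₖ ρ (d a) = ∑ a, φ (b a) ⊗ₖ φ (d a)) :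
    LinearMap.range φ ≤ LinearMap.range ρ := by
  rintro _ ⟨Y, rfl⟩
  have h := congrArg (fun C => traceRight (C * (1 ⊗ₖ φ Y))) hcas
  simp only [traceRight_sum_kronecker_mul] at h
  have hφ : ∑ a, (φ (d a) * φ Y).trace • φ (b a) = c • φ Y := by
    simp_rw [trace_mul_comm (φ (d _)), htr, mul_smul, ← Finset.smul_sum, ← map_smul, ← map_sum,
      b.sum_apply_dual_smul B d hdual, map_smul]
  have hρ : ∑ a, (ρ (d a) * φ Y).trace • ρ (b a) ∈ LinearMap.range ρ :=
    Submodule.sum_mem _ fun a _ => Submodule.smul_mem _ _ (LinearMap.mem_range_self ρ _)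
  rw [h, hφ] at hρ
  exact (Submodule.smul_mem_iff _ hc).mp hρ

theorem LieHom.exists_lieEquiv_apply_eq {K L A : Type*} [Field K] [LieRing L] [LieAlgebra K L]
    [FiniteDimensional K L] [LieRing A] [LieAlgebra K A] (ρ φ : L →ₗ⁅K⁆ A)
    (hρ : Function.Injective ρ) (hφ : Function.Injective φ) (h : φ.range ≤ ρ.range) :
    ∃ e : L ≃ₗ⁅K⁆ L, ∀ X, ρ (e X) = φ X := by
  let f : L →ₗ⁅K⁆ L := ((LieEquiv.ofInjective ρ hρ).symm : ρ.range →ₗ⁅K⁆ L).comp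
    ((LieSubalgebra.inclusion h).comp φ.rangeRestrict)
  have hf : ∀ X, ρ (f X) = φ X := fun X => by
    rw [← LieEquiv.ofInjective_apply ρ hρ]
    simp [f]
  have hinj : Function.Injective f := fun X Y hXY => hφ (by rw [← hf, ← hf, hXY])
  exact ⟨LieEquiv.ofBijective f ⟨hinj, LinearMap.injective_iff_surjective.mp hinj⟩, hf⟩

theorem stmt_3_general {L : Type*} [LieRing L] [LieAlgebra ℂ L] [FiniteDimensional ℂ L]
    {d : ℕ} (ρ₁ ρ₂ : L →ₗ⁅ℂ⁆ Matrix (Fin d) (Fin d) ℂ)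
    (hρ₁ : Function.Injective ρ₁) (hρ₂ : Function.Injective ρ₂)
    (c₂ : ℂ) (hc₂ : c₂ ≠ 0)
    (htr₂ : ∀ X Y : L, Matrix.trace (ρ₂ X * ρ₂ Y) = c₂ * killingForm ℂ L X Y)
    {ι : Type*} [Fintype ι] [DecidableEq ι] (Xb : Module.Basis ι ℂ L) (Xd : ι → L)
    (hdual : ∀ A B : ι, killingForm ℂ L (Xb A) (Xd B) = if A = B then 1 else 0)
    (κ : Matrix (Fin d) (Fin d) ℂ) (hκ : IsUnit κ)
    (hcbYBE : (∑ A : ι, ρ₁ (Xb A) ⊗ₖ ρ₁ (Xd A)) * (κ ⊗ₖ κ) =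
        (κ ⊗ₖ κ) * (∑ A : ι, ρ₂ (Xb A) ⊗ₖ ρ₂ (Xd A))) :
    ∃ α : L ≃ₗ[ℂ] L, (∀ X : L, ρ₁ (α X) = κ * ρ₂ X * κ⁻¹) ∧
      (∀ X Y : L, killingForm ℂ L (α X) (α Y) = killingForm ℂ L X Y) := by
  let _ : Invertible κ := hκ.invertible
  let φ : L →ₗ⁅ℂ⁆ Matrix (Fin d) (Fin d) ℂ := (κ.lieConj ‹_›).toLieHom.comp ρ₂
  have hφ : ∀ X, φ X = κ * ρ₂ X * κ⁻¹ := fun X => κ.lieConj_apply (ρ₂ X) _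
  have hcas : ∑ A, ρ₁ (Xb A) ⊗ₖ ρ₁ (Xd A) = ∑ A, φ (Xb A) ⊗ₖ φ (Xd A) := by
    rw [κ.eq_kronecker_mul_inv_of_mul_eq hcbYBE, Matrix.kronecker_mul_sum_kronecker_mul]
    simp only [hφ]
  have htr : ∀ X Y, Matrix.trace (φ X * φ Y) = c₂ * killingForm ℂ L X Y := fun X Y => by
    have : φ X * φ Y = κ * (ρ₂ X * ρ₂ Y) * κ⁻¹ := by
      simp only [hφ, mul_assoc, Matrix.inv_mul_cancel_left_of_invertible]
    rw [this, Matrix.trace_conj hκ, htr₂]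
  have hrange : φ.range ≤ ρ₁.range := (LieSubalgebra.toSubmodule_le_toSubmodule _ _).mp
    (range_le_range_of_sum_kronecker_eq ρ₁.toLinearMap φ.toLinearMap _ Xb Xd hdual hc₂ htr hcas)
  obtain ⟨α, hα⟩ := ρ₁.exists_lieEquiv_apply_eq φ hρ₁ ((κ.lieConj _).injective.comp hρ₂) hrange
  exact ⟨α.toLinearEquiv, fun X => (hα X).trans (hφ X), LieAlgebra.killingForm_of_equiv_apply α⟩

/-- if `κ` is invertible and `C^{(11)}(κ⊗κ) = (κ⊗κ)C^{(22)}`, then the map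
`α := (ρ⁽¹⁾)⁻¹ ∘ Ad_κ ∘ ρ⁽²⁾` is a well-defined linear bijection of `𝔤` preserving the
Killing form. -/
theorem stmt_3 {L : Type*} [LieRing L] [LieAlgebra ℂ L] [FiniteDimensional ℂ L]
    [LieAlgebra.IsSimple ℂ L]
    (hB : LinearMap.BilinForm.Nondegenerate (killingForm ℂ L))
    {d : ℕ} (ρ₁ ρ₂ : L →ₗ⁅ℂ⁆ Matrix (Fin d) (Fin d) ℂ)
    (hρ₁ : Function.Injective ρ₁) (hρ₂ : Function.Injective ρ₂)
    (c₁ c₂ : ℂ) (hc₁ : c₁ ≠ 0) (hc₂ : c₂ ≠ 0)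
    (htr₁ : ∀ X Y : L, Matrix.trace (ρ₁ X * ρ₁ Y) = c₁ * killingForm ℂ L X Y)
    (htr₂ : ∀ X Y : L, Matrix.trace (ρ₂ X * ρ₂ Y) = c₂ * killingForm ℂ L X Y)
    {ι : Type*} [Fintype ι] [DecidableEq ι] (Xb : Module.Basis ι ℂ L) (Xd : ι → L)
    (hdual : ∀ A B : ι, killingForm ℂ L (Xb A) (Xd B) = if A = B then 1 else 0)
    (κ : Matrix (Fin d) (Fin d) ℂ) (hκ : IsUnit κ)
    (hcbYBE : (∑ A : ι, ρ₁ (Xb A) ⊗ₖ ρ₁ (Xd A)) * (κ ⊗ₖ κ) =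
        (κ ⊗ₖ κ) * (∑ A : ι, ρ₂ (Xb A) ⊗ₖ ρ₂ (Xd A))) :
    ∃ α : L ≃ₗ[ℂ] L, (∀ X : L, ρ₁ (α X) = κ * ρ₂ X * κ⁻¹) ∧
      (∀ X Y : L, killingForm ℂ L (α X) (α Y) = killingForm ℂ L X Y) :=
  stmt_3_general ρ₁ ρ₂ hρ₁ hρ₂ c₂ hc₂ htr₂ Xb Xd hdual κ hκ hcbYBE
end

section
/- Suppose κ ∈ End(ℂ^d) is invertible and satisfies both C^{(11)}·(κ⊗κ) = (κ⊗κ)·C^{(22)} and (κ⊗1)·C^{(21)}·(1⊗κ) = (1⊗κ)·C^{(12)}·(κ⊗1). Then the linear map α := (ρ⁽¹⁾)⁻¹ ∘ Ad_κ ∘ ρ⁽²⁾ : 𝔤 → 𝔤 is self-adjoint with respect to the Killing form, B(α(X), Y) = B(X, α(Y)) for all X,Y ∈ 𝔤, and satisfies α ∘ α = id_𝔤. -/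
open Kronecker

attribute [local instance 100] LieRing.ofAssociativeRing

/-!
Put `σ := Ad_κ ∘ ρ⁽²⁾`. Right-multiplied by `κ⁻¹ ⊗ κ⁻¹`, the first constraint reads
`∑ ρ⁽¹⁾(X_A) ⊗ ρ⁽¹⁾(X^A) = ∑ σ(X_A) ⊗ σ(X^A)`. Taking the partial trace of both sides against
`σ(Y)` and using that the trace form of `σ` is `c⁽²⁾ B` expresses `c⁽²⁾ σ(Y)` as a combination of
the `ρ⁽¹⁾(X_A)`, which defines `α` with `ρ⁽¹⁾ ∘ α = σ`. The second constraint then reads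
`∑ ρ⁽¹⁾(α X_A) ⊗ ρ⁽¹⁾(X^A) = ∑ ρ⁽¹⁾(X_A) ⊗ ρ⁽¹⁾(α X^A)`, and pairing it with `ρ⁽¹⁾(X) ⊗ ρ⁽¹⁾(Y)`
under the trace gives `B(α Y, X) = B(α X, Y)`. Finally `α` is an injective, hence bijective, Lie
algebra endomorphism, so it preserves `B`, and `B(Z, α² X) = B(α Z, α X) = B(Z, X)`.
-/

namespace Matrix

variable {ι m m' n R : Type*} [Fintype ι] [Fintype n] [CommSemiring R]

def partialTraceSnd : Matrix (m × n) (m' × n) R →ₗ[R] Matrix m m' R where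
  toFun M := of fun i k => ∑ j, M (i, j) (k, j)
  map_add' M N := by ext; simp [Finset.sum_add_distrib]
  map_smul' c M := by ext; simp [Finset.mul_sum]

theorem partialTraceSnd_kronecker (A : Matrix m m' R) (B : Matrix n n R) :
    partialTraceSnd (A ⊗ₖ B) = B.trace • A := by
  ext i k
  simp [partialTraceSnd, trace, Finset.mul_sum, mul_comm]

theorem sum_trace_mul_smul_eq_of_sum_kronecker_eq [Fintype m'] [DecidableEq m']
    {P R' : ι → Matrix m m' R} {Q S : ι → Matrix n n R}
    (h : ∑ a, P a ⊗ₖ Q a = ∑ a, R' a ⊗ₖ S a) (N : Matrix n n R) :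
    ∑ a, trace (Q a * N) • P a = ∑ a, trace (S a * N) • R' a := by
  simpa [Matrix.sum_mul, ← mul_kronecker_mul, partialTraceSnd_kronecker] using
    congrArg (fun T : Matrix (m × n) (m' × n) R =>
      partialTraceSnd (T * ((1 : Matrix m' m' R) ⊗ₖ N))) h

theorem sum_trace_mul_trace_eq_of_sum_kronecker_eq [Fintype m]
    {P R' : ι → Matrix m m R} {Q S : ι → Matrix n n R}
    (h : ∑ a, P a ⊗ₖ Q a = ∑ a, R' a ⊗ₖ S a) (M : Matrix m m R) (N : Matrix n n R) :
    ∑ a, trace (P a * M) * trace (Q a * N) = ∑ a, trace (R' a * M) * trace (S a * N) := by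
  simpa [Finset.sum_mul, ← mul_kronecker_mul, trace_kronecker] using
    congrArg (fun T => trace (T * (M ⊗ₖ N))) h

end Matrix

namespace LinearMap.BilinForm

variable {ι K V : Type*} [Fintype ι] [DecidableEq ι] [Field K] [AddCommGroup V] [Module K V]
  {B : LinearMap.BilinForm K V} {b : Module.Basis ι K V} {d : ι → V}
  (hd : ∀ i j, B (b i) (d j) = if i = j then 1 else 0)
include hd

theorem sum_apply_dual_smul_basis (hB : B.IsSymm) (v : V) : ∑ i, B (d i) v • b i = v := by
  have h (i : ι) : B.flip (d i) = b.coord i := b.ext fun j => by simp [hd, Finsupp.single_apply]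
  have h' (i : ι) : B (d i) v = b.repr v i := by rw [hB.eq, ← b.coord_apply, ← h]; rfl
  simp_rw [h']
  exact b.sum_repr v

theorem sum_apply_basis_smul_dual (hB : B.SeparatingRight) (v : V) :
    ∑ i, B (b i) v • d i = v := by
  have h : B.flip (∑ i, B (b i) v • d i - v) = 0 := b.ext fun j => by simp [hd]
  exact sub_eq_zero.mp (hB _ fun x => LinearMap.congr_fun h x)

theorem sum_map_basis_mul_apply_dual (hB : B.IsSymm) (φ : V →ₗ[K] K) (v : V) :
    ∑ i, φ (b i) * B (d i) v = φ v := by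
  conv_rhs => rw [← sum_apply_dual_smul_basis hd hB v, map_sum]
  simp only [map_smul, smul_eq_mul, mul_comm]

theorem sum_apply_basis_mul_map_dual (hB : B.SeparatingRight) (φ : V →ₗ[K] K) (v : V) :
    ∑ i, B (b i) v * φ (d i) = φ v := by
  conv_rhs => rw [← sum_apply_basis_smul_dual hd hB v, map_sum]
  simp only [map_smul, smul_eq_mul]

variable {n : Type*} [Fintype n] {c : K} (hc : c ≠ 0)
include hc

theorem exists_comp_eq_of_sum_kronecker_eq [DecidableEq n] (hB : B.IsSymm)
    {ρ σ : V →ₗ[K] Matrix n n K} (hσ : ∀ x y, (σ x * σ y).trace = c * B x y)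
    (h : ∑ i, ρ (b i) ⊗ₖ ρ (d i) = ∑ i, σ (b i) ⊗ₖ σ (d i)) :
    ∃ α : V →ₗ[K] V, ∀ x, ρ (α x) = σ x := by
  refine ⟨c⁻¹ • ∑ i, (Matrix.traceLinearMap n K K ∘ₗ mulLeft K (ρ (d i)) ∘ₗ σ).smulRight (b i),
    fun x => ?_⟩
  have hpt : ∑ i, (ρ (d i) * σ x).trace • ρ (b i) = c • σ x := by
    rw [Matrix.sum_trace_mul_smul_eq_of_sum_kronecker_eq h (σ x)]
    conv_rhs => rw [← sum_apply_dual_smul_basis hd hB x]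
    simp only [hσ, map_sum, map_smul, Finset.smul_sum, mul_smul]
  calc _ = c⁻¹ • ∑ i, (ρ (d i) * σ x).trace • ρ (b i) := by simp
    _ = σ x := by rw [hpt, inv_smul_smul₀ hc]

theorem isAdjointPair_of_sum_kronecker_eq (hB : B.IsSymm) (hB' : B.SeparatingRight)
    {ρ : V →ₗ[K] Matrix n n K} (hρ : ∀ x y, (ρ x * ρ y).trace = c * B x y)
    {f : V →ₗ[K] V} (h : ∑ i, ρ (f (b i)) ⊗ₖ ρ (d i) = ∑ i, ρ (b i) ⊗ₖ ρ (f (d i))) :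
    IsAdjointPair B B f f := by
  intro x y
  have htr := Matrix.sum_trace_mul_trace_eq_of_sum_kronecker_eq h (ρ x) (ρ y)
  simp only [hρ, mul_mul_mul_comm c, ← Finset.mul_sum] at htr
  have hl : ∑ i, B (f (b i)) x * B (d i) y = B (f y) x :=
    sum_map_basis_mul_apply_dual hd hB (B.flip x ∘ₗ f) y
  have hr : ∑ i, B (b i) x * B (f (d i)) y = B (f x) y :=
    sum_apply_basis_mul_map_dual hd hB' (B.flip y ∘ₗ f) x
  rw [hl, hr] at htr
  rw [← mul_left_cancel₀ (mul_ne_zero hc hc) htr, hB.eq]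

end LinearMap.BilinForm

theorem LinearMap.map_lie_of_comp_eq_lieHom {K L L' A : Type*} [CommRing K] [LieRing L]
    [LieAlgebra K L] [LieRing L'] [LieAlgebra K L'] [LieRing A] [LieAlgebra K A]
    {ρ : L' →ₗ⁅K⁆ A} (hρ : Function.Injective ρ) {σ : L →ₗ⁅K⁆ A} {α : L →ₗ[K] L'}
    (h : ∀ x, ρ (α x) = σ x) (x y : L) : α ⁅x, y⁆ = ⁅α x, α y⁆ :=
  hρ (by simp [h])

theorem LieHom.involutive_of_isAdjointPair_killingForm {K L : Type*} [Field K] [LieRing L]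
    [LieAlgebra K L] [FiniteDimensional K L] (hB : (killingForm K L).SeparatingRight)
    {α : L →ₗ⁅K⁆ L} (hα : Function.Injective α)
    (hsa : LinearMap.IsAdjointPair (killingForm K L) (killingForm K L) α α) :
    Function.Involutive α := by
  let e := LieEquiv.ofBijective α ⟨hα, LinearMap.injective_iff_surjective.mp hα⟩
  intro x
  refine sub_eq_zero.mp (hB _ fun z => ?_)
  rw [map_sub, ← hsa, sub_eq_zero]
  exact LieAlgebra.killingForm_of_equiv_apply e z x

theorem stmt_4_general {L : Type*} [LieRing L] [LieAlgebra ℂ L] [FiniteDimensional ℂ L]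
    (hB : LinearMap.BilinForm.Nondegenerate (killingForm ℂ L))
    {d : ℕ} (ρ₁ ρ₂ : L →ₗ⁅ℂ⁆ Matrix (Fin d) (Fin d) ℂ)
    (hρ₁ : Function.Injective ρ₁) (hρ₂ : Function.Injective ρ₂)
    (c₁ c₂ : ℂ) (hc₁ : c₁ ≠ 0) (hc₂ : c₂ ≠ 0)
    (htr₁ : ∀ X Y : L, Matrix.trace (ρ₁ X * ρ₁ Y) = c₁ * killingForm ℂ L X Y)
    (htr₂ : ∀ X Y : L, Matrix.trace (ρ₂ X * ρ₂ Y) = c₂ * killingForm ℂ L X Y)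
    {ι : Type*} [Fintype ι] [DecidableEq ι] (Xb : Module.Basis ι ℂ L) (Xd : ι → L)
    (hdual : ∀ A B : ι, killingForm ℂ L (Xb A) (Xd B) = if A = B then 1 else 0)
    (κ : Matrix (Fin d) (Fin d) ℂ) (hκ : IsUnit κ)
    (hcbYBE₁ : (∑ A : ι, ρ₁ (Xb A) ⊗ₖ ρ₁ (Xd A)) * (κ ⊗ₖ κ) =
        (κ ⊗ₖ κ) * (∑ A : ι, ρ₂ (Xb A) ⊗ₖ ρ₂ (Xd A)))
    (hcbYBE₂ : (κ ⊗ₖ (1 : Matrix (Fin d) (Fin d) ℂ)) *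
          (∑ A : ι, ρ₂ (Xb A) ⊗ₖ ρ₁ (Xd A)) * ((1 : Matrix (Fin d) (Fin d) ℂ) ⊗ₖ κ) =
        ((1 : Matrix (Fin d) (Fin d) ℂ) ⊗ₖ κ) *
          (∑ A : ι, ρ₁ (Xb A) ⊗ₖ ρ₂ (Xd A)) * (κ ⊗ₖ (1 : Matrix (Fin d) (Fin d) ℂ))) :
    ∃ α : L →ₗ[ℂ] L, (∀ X : L, ρ₁ (α X) = κ * ρ₂ X * κ⁻¹) ∧
      (∀ X Y : L, killingForm ℂ L (α X) Y = killingForm ℂ L X (α Y)) ∧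
      (∀ X : L, α (α X) = X) := by
  let _ : Invertible κ := hκ.invertible
  let σ : L →ₗ⁅ℂ⁆ Matrix (Fin d) (Fin d) ℂ := (κ.lieConj ‹_› : _ →ₗ⁅ℂ⁆ _).comp ρ₂
  have hσ (X : L) : σ X = κ * ρ₂ X * κ⁻¹ := Matrix.lieConj_apply _ _ _
  have hσtr (X Y : L) : (σ X * σ Y).trace = c₂ * killingForm ℂ L X Y := by
    have hconj : σ X * σ Y = κ * (ρ₂ X * ρ₂ Y) * κ⁻¹ := by simp [hσ, mul_assoc]
    rw [hconj, Matrix.trace_conj hκ, htr₂]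
  have hsymm := LinearMap.BilinForm.isSymm_iff.mpr (LieModule.traceForm_isSymm ℂ L L)
  have h₁ : ∑ A, ρ₁ (Xb A) ⊗ₖ ρ₁ (Xd A) = ∑ A, σ (Xb A) ⊗ₖ σ (Xd A) := by
    simpa [hσ, mul_assoc, Matrix.sum_mul, Matrix.mul_sum, ← Matrix.mul_kronecker_mul] using
      congrArg (· * (κ⁻¹ ⊗ₖ κ⁻¹)) hcbYBE₁
  have h₂ : ∑ A, σ (Xb A) ⊗ₖ ρ₁ (Xd A) = ∑ A, ρ₁ (Xb A) ⊗ₖ σ (Xd A) := by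
    simpa [hσ, mul_assoc, Matrix.sum_mul, Matrix.mul_sum, ← Matrix.mul_kronecker_mul] using
      congrArg (· * (κ⁻¹ ⊗ₖ κ⁻¹)) hcbYBE₂
  obtain ⟨α, hα⟩ : ∃ α : L →ₗ[ℂ] L, ∀ X, ρ₁ (α X) = σ X :=
    LinearMap.BilinForm.exists_comp_eq_of_sum_kronecker_eq hdual hc₂ hsymm
      (ρ := ρ₁.toLinearMap) (σ := σ.toLinearMap) hσtr h₁
  have hsa : LinearMap.IsAdjointPair (killingForm ℂ L) (killingForm ℂ L) α α :=
    LinearMap.BilinForm.isAdjointPair_of_sum_kronecker_eq hdual hc₁ hsymm hB.2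
      (ρ := ρ₁.toLinearMap) htr₁ (by simpa only [LieHom.coe_toLinearMap, hα] using h₂)
  let αL : L →ₗ⁅ℂ⁆ L := { α with map_lie' := α.map_lie_of_comp_eq_lieHom hρ₁ hα _ _ }
  have hαinj : Function.Injective α := .of_comp (f := ρ₁) <| by
    rw [show ⇑ρ₁ ∘ α = σ from funext hα]
    exact (κ.lieConj _).injective.comp hρ₂
  exact ⟨α, fun X => (hα X).trans (hσ X), hsa,
    LieHom.involutive_of_isAdjointPair_killingForm hB.2 (α := αL) hαinj hsa⟩

/-- if `κ` is invertible and satisfies both classical bYBE constraints, then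
the linear map `α := (ρ⁽¹⁾)⁻¹ ∘ Ad_κ ∘ ρ⁽²⁾` is self-adjoint for the Killing form and
satisfies `α ∘ α = id`. -/
theorem stmt_4 {L : Type*} [LieRing L] [LieAlgebra ℂ L] [FiniteDimensional ℂ L]
    [LieAlgebra.IsSimple ℂ L]
    (hB : LinearMap.BilinForm.Nondegenerate (killingForm ℂ L))
    {d : ℕ} (ρ₁ ρ₂ : L →ₗ⁅ℂ⁆ Matrix (Fin d) (Fin d) ℂ)
    (hρ₁ : Function.Injective ρ₁) (hρ₂ : Function.Injective ρ₂)
    (c₁ c₂ : ℂ) (hc₁ : c₁ ≠ 0) (hc₂ : c₂ ≠ 0)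
    (htr₁ : ∀ X Y : L, Matrix.trace (ρ₁ X * ρ₁ Y) = c₁ * killingForm ℂ L X Y)
    (htr₂ : ∀ X Y : L, Matrix.trace (ρ₂ X * ρ₂ Y) = c₂ * killingForm ℂ L X Y)
    {ι : Type*} [Fintype ι] [DecidableEq ι] (Xb : Module.Basis ι ℂ L) (Xd : ι → L)
    (hdual : ∀ A B : ι, killingForm ℂ L (Xb A) (Xd B) = if A = B then 1 else 0)
    (κ : Matrix (Fin d) (Fin d) ℂ) (hκ : IsUnit κ)
    (hcbYBE₁ : (∑ A : ι, ρ₁ (Xb A) ⊗ₖ ρ₁ (Xd A)) * (κ ⊗ₖ κ) =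
        (κ ⊗ₖ κ) * (∑ A : ι, ρ₂ (Xb A) ⊗ₖ ρ₂ (Xd A)))
    (hcbYBE₂ : (κ ⊗ₖ (1 : Matrix (Fin d) (Fin d) ℂ)) *
          (∑ A : ι, ρ₂ (Xb A) ⊗ₖ ρ₁ (Xd A)) * ((1 : Matrix (Fin d) (Fin d) ℂ) ⊗ₖ κ) =
        ((1 : Matrix (Fin d) (Fin d) ℂ) ⊗ₖ κ) *
          (∑ A : ι, ρ₁ (Xb A) ⊗ₖ ρ₂ (Xd A)) * (κ ⊗ₖ (1 : Matrix (Fin d) (Fin d) ℂ))) :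
    ∃ α : L →ₗ[ℂ] L, (∀ X : L, ρ₁ (α X) = κ * ρ₂ X * κ⁻¹) ∧
      (∀ X Y : L, killingForm ℂ L (α X) Y = killingForm ℂ L X (α Y)) ∧
      (∀ X : L, α (α X) = X) :=
  stmt_4_general hB ρ₁ ρ₂ hρ₁ hρ₂ c₁ c₂ hc₁ hc₂ htr₁ htr₂ Xb Xd hdual κ hκ hcbYBE₁ hcbYBE₂
end

section
/- Let ρ : 𝔤 → End(ℂ^d) be a faithful representation with Tr(ρ(X)ρ(Y)) = c·B(X,Y), c ≠ 0. If m ∈ End(ℂ^d) satisfies Σ_A [ρ(X_A), m] ⊗ ρ(X^A) = 0 in End(ℂ^d ⊗ ℂ^d), then [ρ(X), m] = 0 for all X ∈ 𝔤. If moreover ρ is irreducible, then m is a scalar multiple of the identity; and if in addition Tr(m) = 0, then m = 0. -/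
/-!
Contracting the second tensor factor of `Σ_A [ρ(X_A), m] ⊗ ρ(X^A)` with `ρ(Y)` under the trace
gives `Σ_A Tr(ρ(X^A) ρ(Y)) [ρ(X_A), m] = c Σ_A B(Y, X^A) [ρ(X_A), m] = c [ρ(Y), m]`, because
`B(Y, X^A)` is the `X_A`-coordinate of `Y`. As `c ≠ 0`, `m` commutes with `ρ(𝔤)`. Under
irreducibility an eigenspace of `m` is `ρ`-invariant, hence everything (Schur), so `m` is
scalar; a traceless scalar matrix vanishes in characteristic zero.
-/

open Kronecker

attribute [local instance 100] LieRing.ofAssociativeRing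

/-- `ρ` is an irreducible representation on `ℂ^d`: the only subspaces invariant under all
`ρ(X)` are `⊥` and `⊤`. -/
def MatIrreducible {L : Type*} {d : ℕ} (ρ : L → Matrix (Fin d) (Fin d) ℂ) : Prop :=
  ∀ W : Submodule ℂ (Fin d → ℂ), (∀ X : L, ∀ w ∈ W, (ρ X).mulVec w ∈ W) → W = ⊥ ∨ W = ⊤

theorem Matrix.sum_trace_mul_smul_eq_zero_of_sum_kronecker_eq_zero {R ι m n p q : Type*}
    [CommSemiring R] [Fintype ι] [Fintype p] [Fintype q]
    {M : ι → Matrix m n R} {N : ι → Matrix p q R} (h : ∑ i, M i ⊗ₖ N i = 0)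
    (Y : Matrix q p R) : ∑ i, (N i * Y).trace • M i = 0 := by
  ext a b
  have hentry : ∀ k l, ∑ i, M i a b * N i k l = 0 := fun k l => by
    simpa only [Matrix.sum_apply, Matrix.kroneckerMap_apply, Matrix.zero_apply] using
      congrFun (congrFun h (a, k)) (b, l)
  calc (∑ i, (N i * Y).trace • M i) a b
      = ∑ k, ∑ l, (∑ i, M i a b * N i k l) * Y l k := by
        simp only [Matrix.sum_apply, Matrix.smul_apply, smul_eq_mul, Matrix.trace,
          Matrix.diag_apply, Matrix.mul_apply, Finset.sum_mul]
        rw [Finset.sum_comm]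
        refine Finset.sum_congr rfl fun k _ => ?_
        rw [Finset.sum_comm]
        exact Finset.sum_congr rfl fun l _ => Finset.sum_congr rfl fun i _ => by ring
    _ = 0 := by simp [hentry]

theorem Module.Basis.apply_eq_repr_of_dual {R M ι : Type*} [CommSemiring R] [AddCommMonoid M]
    [Module R M] [DecidableEq ι] (b : Module.Basis ι R M) (d : ι → M)
    (B : LinearMap.BilinForm R M) (hd : ∀ i j, B (b i) (d j) = if i = j then 1 else 0)
    (x : M) (i : ι) : B x (d i) = b.repr x i :=
  LinearMap.congr_fun (b.ext (f₁ := B.flip (d i)) (f₂ := b.coord i) fun j => by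
    simp [hd, Finsupp.single_apply]) x

theorem Module.Basis.mul_sub_mul_eq_sum_repr_smul {R L A ι : Type*} [CommSemiring R]
    [AddCommMonoid L] [Module R L] [Ring A] [Algebra R A] [Fintype ι]
    (b : Module.Basis ι R L) (ρ : L →ₗ[R] A) (a : A) (x : L) :
    ρ x * a - a * ρ x = ∑ i, b.repr x i • (ρ (b i) * a - a * ρ (b i)) := by
  let f := (LinearMap.mulRight R a - LinearMap.mulLeft R a) ∘ₗ ρ
  simpa only [f, map_sum, map_smul, LinearMap.comp_apply, LinearMap.sub_apply,
    LinearMap.mulRight_apply, LinearMap.mulLeft_apply] using congrArg f (b.sum_repr x).symm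

theorem Matrix.commute_of_sum_kronecker_eq_zero {K L ι n : Type*} [Field K] [AddCommGroup L]
    [Module K L] [Fintype ι] [DecidableEq ι] [Fintype n] [DecidableEq n]
    (B : LinearMap.BilinForm K L) (ρ : L →ₗ[K] Matrix n n K) {c : K} (hc : c ≠ 0)
    (htr : ∀ X Y, (ρ X * ρ Y).trace = c * B X Y) (b : Module.Basis ι K L) (d : ι → L)
    (hd : ∀ i j, B (b i) (d j) = if i = j then 1 else 0) {m : Matrix n n K}
    (hm : ∑ i, (ρ (b i) * m - m * ρ (b i)) ⊗ₖ ρ (d i) = 0) (X : L) :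
    ρ X * m = m * ρ X := by
  have hcoeff : ∀ i, (ρ (d i) * ρ X).trace = c * b.repr X i := fun i => by
    rw [Matrix.trace_mul_comm, htr, b.apply_eq_repr_of_dual d B hd]
  have hcomm : c • (ρ X * m - m * ρ X) = 0 := by
    rw [b.mul_sub_mul_eq_sum_repr_smul ρ m X, Finset.smul_sum]
    simpa [hcoeff, smul_smul] using
      Matrix.sum_trace_mul_smul_eq_zero_of_sum_kronecker_eq_zero hm (ρ X)
  exact sub_eq_zero.mp ((smul_eq_zero.mp hcomm).resolve_left hc)

theorem MatIrreducible.exists_eq_smul_one {L : Type*} {d : ℕ}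
    {ρ : L → Matrix (Fin d) (Fin d) ℂ} (hρ : MatIrreducible ρ) {m : Matrix (Fin d) (Fin d) ℂ}
    (hm : ∀ X, ρ X * m = m * ρ X) : ∃ c : ℂ, m = c • 1 := by
  rcases isEmpty_or_nonempty (Fin d) with hd | hd
  · exact ⟨0, Subsingleton.elim _ _⟩
  obtain ⟨μ, hμ⟩ := Module.End.exists_eigenvalue (Matrix.toLin' m)
  have hinv : ∀ X, ∀ w ∈ Module.End.eigenspace (Matrix.toLin' m) μ,
      (ρ X).mulVec w ∈ Module.End.eigenspace (Matrix.toLin' m) μ := by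
    intro X w hw
    rw [Module.End.mem_eigenspace_iff, Matrix.toLin'_apply] at hw ⊢
    rw [Matrix.mulVec_mulVec, ← hm, ← Matrix.mulVec_mulVec, hw, Matrix.mulVec_smul]
  have htop := (hρ _ hinv).resolve_left hμ
  rw [Module.End.eigenspace_def, LinearMap.ker_eq_top, sub_eq_zero] at htop
  refine ⟨μ, Matrix.toLin'.injective ?_⟩
  rw [htop, map_smul, Matrix.toLin'_one]
  rfl

theorem Matrix.eq_zero_of_trace_eq_zero_of_eq_smul_one {K n : Type*} [Field K] [CharZero K]
    [Fintype n] [DecidableEq n] {m : Matrix n n K} {c : K} (hm : m = c • 1)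
    (htr : m.trace = 0) : m = 0 := by
  rcases isEmpty_or_nonempty n with hn | hn
  · exact Subsingleton.elim _ _
  rw [hm, trace_smul, trace_one, smul_eq_mul, mul_eq_zero, Nat.cast_eq_zero,
    Fintype.card_eq_zero_iff, or_iff_left (not_isEmpty_of_nonempty n)] at htr
  rw [hm, htr, zero_smul]

theorem stmt_9_general {L : Type*} [LieRing L] [LieAlgebra ℂ L]
    {d : ℕ} (ρ : L →ₗ⁅ℂ⁆ Matrix (Fin d) (Fin d) ℂ)
    (c : ℂ) (hc : c ≠ 0)
    (htr : ∀ X Y : L, Matrix.trace (ρ X * ρ Y) = c * killingForm ℂ L X Y)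
    {ι : Type*} [Fintype ι] [DecidableEq ι] (Xb : Module.Basis ι ℂ L) (Xd : ι → L)
    (hdual : ∀ A B : ι, killingForm ℂ L (Xb A) (Xd B) = if A = B then 1 else 0)
    (m : Matrix (Fin d) (Fin d) ℂ)
    (hm : ∑ A : ι, (ρ (Xb A) * m - m * ρ (Xb A)) ⊗ₖ ρ (Xd A) = 0) :
    (∀ X : L, ρ X * m = m * ρ X) ∧
      (MatIrreducible (fun X : L => ρ X) →
        (∃ c₀ : ℂ, m = c₀ • (1 : Matrix (Fin d) (Fin d) ℂ)) ∧
          (Matrix.trace m = 0 → m = 0)) := by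
  have hcomm : ∀ X, ρ X * m = m * ρ X :=
    Matrix.commute_of_sum_kronecker_eq_zero (killingForm ℂ L) ρ.toLinearMap hc htr Xb Xd hdual hm
  refine ⟨hcomm, fun hirr => ?_⟩
  obtain ⟨c₀, hc₀⟩ := hirr.exists_eq_smul_one hcomm
  exact ⟨⟨c₀, hc₀⟩, Matrix.eq_zero_of_trace_eq_zero_of_eq_smul_one hc₀⟩

/-- if `Σ_A [ρ(X_A), m] ⊗ ρ(X^A) = 0` then `m` commutes with `ρ(𝔤)`;
if moreover `ρ` is irreducible then `m` is scalar, and if in addition `Tr(m) = 0`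
then `m = 0`. -/
theorem stmt_9 {L : Type*} [LieRing L] [LieAlgebra ℂ L] [FiniteDimensional ℂ L]
    [LieAlgebra.IsSimple ℂ L]
    (hB : LinearMap.BilinForm.Nondegenerate (killingForm ℂ L))
    {d : ℕ} (ρ : L →ₗ⁅ℂ⁆ Matrix (Fin d) (Fin d) ℂ)
    (hρ : Function.Injective ρ)
    (c : ℂ) (hc : c ≠ 0)
    (htr : ∀ X Y : L, Matrix.trace (ρ X * ρ Y) = c * killingForm ℂ L X Y)
    {ι : Type*} [Fintype ι] [DecidableEq ι] (Xb : Module.Basis ι ℂ L) (Xd : ι → L)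
    (hdual : ∀ A B : ι, killingForm ℂ L (Xb A) (Xd B) = if A = B then 1 else 0)
    (m : Matrix (Fin d) (Fin d) ℂ)
    (hm : ∑ A : ι, (ρ (Xb A) * m - m * ρ (Xb A)) ⊗ₖ ρ (Xd A) = 0) :
    (∀ X : L, ρ X * m = m * ρ X) ∧
      (MatIrreducible (fun X : L => ρ X) →
        (∃ c₀ : ℂ, m = c₀ • (1 : Matrix (Fin d) (Fin d) ℂ)) ∧
          (Matrix.trace m = 0 → m = 0)) :=
  stmt_9_general ρ c hc htr Xb Xd hdual m hm
end

section
/- Let ρ : 𝔤 → End(ℂ^d) be a faithful representation with Tr(ρ(X)ρ(Y)) = c·B(X,Y), c ≠ 0, and let α : 𝔤 → 𝔤 be a Lie algebra involution with fixed subalgebra 𝔥 := {X : α(X) = X}. If m ∈ End(ℂ^d) satisfies Σ_A ρ(X_A + α(X_A)) ⊗ [ρ(X^A), m] = 0 in End(ℂ^d ⊗ ℂ^d), then [ρ(X), m] = 0 for all X ∈ 𝔥. -/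
/-!
Contracting the first tensor factor of the hypothesis against `ρ X` turns `ρ (X_A + α X_A)`
into the scalar `Tr (ρ (X_A + α X_A) ρ X) = 2c · B(X_A, X)`, because `α` preserves the Killing
form and fixes `X`. The dual-basis expansion `X = ∑_A B(X_A, X) X^A` then collapses the
contracted sum to `2c · [ρ X, m]`.
-/

open Kronecker

attribute [local instance 100] LieRing.ofAssociativeRing

namespace LinearMap.BilinForm

theorem sum_apply_smul_eq_of_dual {R V ι : Type*} [CommRing R] [AddCommGroup V] [Module R V]
    [Fintype ι] [DecidableEq ι] {B : LinearMap.BilinForm R V} (hB : B.SeparatingRight)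
    (b : Module.Basis ι R V) (d : ι → V) (hd : ∀ i j, B (b i) (d j) = if i = j then 1 else 0)
    (v : V) : ∑ i, B (b i) v • d i = v := by
  have hflip : B.flip (∑ i, B (b i) v • d i - v) = 0 := b.ext fun j => by simp [hd]
  exact sub_eq_zero.mp (hB _ fun x => LinearMap.congr_fun hflip x)

end LinearMap.BilinForm

theorem LieAlgebra.killingForm_apply_involution_left {R L : Type*} [CommRing R] [LieRing L]
    [LieAlgebra R L] [Module.Free R L] [Module.Finite R L] (α : L →ₗ⁅R⁆ L)
    (hα : ∀ x, α (α x) = x) (x y : L) :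
    killingForm R L (α x) y = killingForm R L x (α y) := by
  let e : L ≃ₗ⁅R⁆ L := { α with invFun := α, left_inv := hα, right_inv := hα }
  conv_lhs => rw [← hα y]
  exact killingForm_of_equiv_apply e x (α y)

namespace Matrix

variable {R n p : Type*} [CommSemiring R] [Fintype n]

/-- The partial trace over the first factor of `M * (P ⊗ₖ 1)`. -/
def contractLeft (P : Matrix n n R) : Matrix (n × p) (n × p) R →ₗ[R] Matrix p p R where
  toFun M := of fun j l => ∑ i, ∑ k, P k i * M (i, j) (k, l)
  map_add' M N := by ext; simp [mul_add, Finset.sum_add_distrib]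
  map_smul' r M := by ext; simp [Finset.mul_sum, mul_left_comm]

theorem contractLeft_kronecker (P A : Matrix n n R) (N : Matrix p p R) :
    contractLeft P (A ⊗ₖ N) = trace (A * P) • N := by
  ext j l
  simp only [contractLeft, LinearMap.coe_mk, AddHom.coe_mk, of_apply, kroneckerMap_apply,
    smul_apply, smul_eq_mul, trace, diag, mul_apply, Finset.sum_mul]
  exact Finset.sum_congr rfl fun i _ => Finset.sum_congr rfl fun k _ => by ring

end Matrix

theorem stmt_11_general {L : Type*} [LieRing L] [LieAlgebra ℂ L] [FiniteDimensional ℂ L]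
    (hB : LinearMap.BilinForm.Nondegenerate (killingForm ℂ L))
    {d : ℕ} (ρ : L →ₗ⁅ℂ⁆ Matrix (Fin d) (Fin d) ℂ)
    (c : ℂ) (hc : c ≠ 0)
    (htr : ∀ X Y : L, Matrix.trace (ρ X * ρ Y) = c * killingForm ℂ L X Y)
    {ι : Type*} [Fintype ι] [DecidableEq ι] (Xb : Module.Basis ι ℂ L) (Xd : ι → L)
    (hdual : ∀ A B : ι, killingForm ℂ L (Xb A) (Xd B) = if A = B then 1 else 0)
    (α : L →ₗ⁅ℂ⁆ L) (hα : ∀ X : L, α (α X) = X)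
    (m : Matrix (Fin d) (Fin d) ℂ)
    (hm : ∑ A : ι, ρ (Xb A + α (Xb A)) ⊗ₖ (ρ (Xd A) * m - m * ρ (Xd A)) = 0) :
    ∀ X : L, α X = X → ρ X * m = m * ρ X := by
  intro X hX
  let bracketM : L →ₗ[ℂ] Matrix (Fin d) (Fin d) ℂ :=
    (LinearMap.mulRight ℂ m - LinearMap.mulLeft ℂ m) ∘ₗ (ρ : L →ₗ[ℂ] Matrix (Fin d) (Fin d) ℂ)
  have hcoef (A : ι) :
      Matrix.trace (ρ (Xb A + α (Xb A)) * ρ X) = (2 * c) * killingForm ℂ L (Xb A) X := by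
    rw [htr, map_add, LinearMap.add_apply,
      LieAlgebra.killingForm_apply_involution_left α hα, hX]
    ring
  have hcontract : bracketM (∑ A, ((2 * c) * killingForm ℂ L (Xb A) X) • Xd A) = 0 := by
    have h := congrArg (Matrix.contractLeft (ρ X)) hm
    rw [map_sum, map_zero] at h
    simp only [Matrix.contractLeft_kronecker, hcoef] at h
    simp only [map_sum, map_smul]
    exact h
  simp_rw [mul_smul, ← Finset.smul_sum,
    LinearMap.BilinForm.sum_apply_smul_eq_of_dual hB.2 Xb Xd hdual, map_smul] at hcontract
  simpa [bracketM, hc, sub_eq_zero] using hcontract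

/-- if `α` is a Lie algebra involution with fixed subalgebra
`𝔥 = {X : α(X) = X}` and `Σ_A ρ(X_A + α(X_A)) ⊗ [ρ(X^A), m] = 0`, then `[ρ(X), m] = 0`
for all `X ∈ 𝔥`. -/
theorem stmt_11 {L : Type*} [LieRing L] [LieAlgebra ℂ L] [FiniteDimensional ℂ L]
    [LieAlgebra.IsSimple ℂ L]
    (hB : LinearMap.BilinForm.Nondegenerate (killingForm ℂ L))
    {d : ℕ} (ρ : L →ₗ⁅ℂ⁆ Matrix (Fin d) (Fin d) ℂ)
    (hρ : Function.Injective ρ)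
    (c : ℂ) (hc : c ≠ 0)
    (htr : ∀ X Y : L, Matrix.trace (ρ X * ρ Y) = c * killingForm ℂ L X Y)
    {ι : Type*} [Fintype ι] [DecidableEq ι] (Xb : Module.Basis ι ℂ L) (Xd : ι → L)
    (hdual : ∀ A B : ι, killingForm ℂ L (Xb A) (Xd B) = if A = B then 1 else 0)
    (α : L →ₗ⁅ℂ⁆ L) (hα : ∀ X : L, α (α X) = X)
    (m : Matrix (Fin d) (Fin d) ℂ)
    (hm : ∑ A : ι, ρ (Xb A + α (Xb A)) ⊗ₖ (ρ (Xd A) * m - m * ρ (Xd A)) = 0) :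
    ∀ X : L, α X = X → ρ X * m = m * ρ X :=
  stmt_11_general hB ρ c hc htr Xb Xd hdual α hα m hm
end

section
/- Let n ≥ 1, let P ∈ End(ℂⁿ ⊗ ℂⁿ) be the flip P(x⊗y) = y⊗x, and define the rational (Yang) R-matrix R(u) := 1 + u⁻¹·P. For any matrix κ ∈ End(ℂⁿ) with κ² = 0, the matrix-valued function K(u) := κ + u⁻¹·1 satisfies the boundary Yang–Baxter equation R(u−v)·(K(u)⊗1)·R(u+v)·(1⊗K(v)) = (1⊗K(v))·R(u+v)·(K(u)⊗1)·R(u−v) for all u, v ∈ ℂ with u, v, u−v, u+v all nonzero. -/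
open Kronecker

/-!
Clearing the denominators `u`, `v`, `u ± v` turns the boundary Yang–Baxter equation into an
identity in the algebra generated by `a = κ ⊗ 1`, `b = 1 ⊗ κ` and the flip `P`, which only uses
`P a = b P`, `P b = a P`, `P² = 1`, `a² = b² = 0` and `a b = b a`. Expanding both sides and
normalising with these relations gives the same element.
-/

section ReflectionEquation

variable {k A : Type*} [CommRing k] [Ring A] [Algebra k A]

theorem reflection_equation_of_sq_eq_zero (a b p : A)
    (hpa : p * a = b * p) (hpb : p * b = a * p) (hpp : p * p = 1)
    (ha : a * a = 0) (hb : b * b = 0) (hab : b * a = a * b) (u v : k) :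
    ((u - v) • 1 + p) * (u • a + 1) * ((u + v) • 1 + p) * (v • b + 1) =
      (v • b + 1) * ((u + v) • 1 + p) * (u • a + 1) * ((u - v) • 1 + p) := by
  have ha' (x : A) : a * (a * x) = 0 := by rw [← mul_assoc, ha, zero_mul]
  have hb' (x : A) : b * (b * x) = 0 := by rw [← mul_assoc, hb, zero_mul]
  have hab' (x : A) : b * (a * x) = a * (b * x) := by rw [← mul_assoc, hab, mul_assoc]
  simp only [add_mul, mul_add, mul_one, one_mul, smul_mul_assoc, mul_smul_comm, smul_smul,
    mul_assoc, smul_add, hpa, hpb, hpp, hb, hab, ha', hb', hab', smul_zero, add_zero, zero_add]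
  module

end ReflectionEquation

namespace Matrix

variable {m α : Type*} [Fintype m] [DecidableEq m] [CommSemiring α]

theorem prodComm_mul_kronecker (A B : Matrix m m α) :
    (Equiv.prodComm m m).toPEquiv.toMatrix * (A ⊗ₖ B) =
      (B ⊗ₖ A) * (Equiv.prodComm m m).toPEquiv.toMatrix := by
  ext p q
  simp [PEquiv.toMatrix_toPEquiv_mul, PEquiv.mul_toMatrix_toPEquiv, mul_comm]

theorem prodComm_mul_prodComm :
    ((Equiv.prodComm m m).toPEquiv.toMatrix * (Equiv.prodComm m m).toPEquiv.toMatrix :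
      Matrix (m × m) (m × m) α) = 1 := by
  rw [← PEquiv.toMatrix_trans, ← Equiv.toPEquiv_trans]
  nth_rw 1 [← Equiv.prodComm_symm]
  rw [Equiv.symm_trans_self, Equiv.toPEquiv_refl, PEquiv.toMatrix_refl]

end Matrix

theorem stmt_16_general (n : ℕ)
    (P : Matrix (Fin n × Fin n) (Fin n × Fin n) ℂ)
    (hP : P = fun p q => if p.1 = q.2 ∧ p.2 = q.1 then 1 else 0)
    (R : ℂ → Matrix (Fin n × Fin n) (Fin n × Fin n) ℂ)
    (hR : ∀ u : ℂ, R u = 1 + u⁻¹ • P)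
    (κ : Matrix (Fin n) (Fin n) ℂ) (hκ : κ * κ = 0)
    (K : ℂ → Matrix (Fin n) (Fin n) ℂ)
    (hK : ∀ u : ℂ, K u = κ + u⁻¹ • (1 : Matrix (Fin n) (Fin n) ℂ)) :
    ∀ u v : ℂ, u ≠ 0 → v ≠ 0 → u - v ≠ 0 → u + v ≠ 0 →
      R (u - v) * (K u ⊗ₖ (1 : Matrix (Fin n) (Fin n) ℂ)) * R (u + v) *
          ((1 : Matrix (Fin n) (Fin n) ℂ) ⊗ₖ K v) =
        ((1 : Matrix (Fin n) (Fin n) ℂ) ⊗ₖ K v) * R (u + v) *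
          (K u ⊗ₖ (1 : Matrix (Fin n) (Fin n) ℂ)) * R (u - v) := by
  intro u v hu hv hw hs
  have hP' : P = (Equiv.prodComm (Fin n) (Fin n)).toPEquiv.toMatrix := by
    ext p q
    simp [hP, Prod.ext_iff, eq_comm, and_comm]
  have hR' (c : ℂ) (hc : c ≠ 0) : R c = c⁻¹ • (c • 1 + P) := by
    rw [hR, smul_add, inv_smul_smul₀ hc]
  have hKu : K u ⊗ₖ (1 : Matrix (Fin n) (Fin n) ℂ) = u⁻¹ • (u • (κ ⊗ₖ 1) + 1) := by
    rw [hK, Matrix.add_kronecker, Matrix.smul_kronecker, Matrix.one_kronecker_one, smul_add,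
      inv_smul_smul₀ hu]
  have hKv : (1 : Matrix (Fin n) (Fin n) ℂ) ⊗ₖ K v = v⁻¹ • (v • (1 ⊗ₖ κ) + 1) := by
    rw [hK, Matrix.kronecker_add, Matrix.kronecker_smul, Matrix.one_kronecker_one, smul_add,
      inv_smul_smul₀ hv]
  rw [hR' _ hw, hR' _ hs, hKu, hKv]
  simp only [smul_mul_assoc, mul_smul_comm, smul_smul]
  rw [show (u - v)⁻¹ * (u⁻¹ * ((u + v)⁻¹ * v⁻¹)) = v⁻¹ * ((u + v)⁻¹ * (u⁻¹ * (u - v)⁻¹)) by ring]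
  congr 1
  refine reflection_equation_of_sq_eq_zero _ _ P ?_ ?_ ?_ ?_ ?_ ?_ u v
  · rw [hP', Matrix.prodComm_mul_kronecker]
  · rw [hP', Matrix.prodComm_mul_kronecker]
  · rw [hP', Matrix.prodComm_mul_prodComm]
  · rw [← Matrix.mul_kronecker_mul, hκ, Matrix.zero_kronecker]
  · rw [← Matrix.mul_kronecker_mul, hκ, Matrix.kronecker_zero]
  · rw [← Matrix.mul_kronecker_mul, ← Matrix.mul_kronecker_mul, one_mul, mul_one]

/-- for the rational (Yang) R-matrix `R(u) = 1 + u⁻¹P` and any `κ` with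
`κ² = 0`, the function `K(u) = κ + u⁻¹·1` satisfies the boundary Yang–Baxter equation
for all `u, v` with `u, v, u−v, u+v ≠ 0`. -/
theorem stmt_16 (n : ℕ) (hn : 1 ≤ n)
    (P : Matrix (Fin n × Fin n) (Fin n × Fin n) ℂ)
    (hP : P = fun p q => if p.1 = q.2 ∧ p.2 = q.1 then 1 else 0)
    (R : ℂ → Matrix (Fin n × Fin n) (Fin n × Fin n) ℂ)
    (hR : ∀ u : ℂ, R u = 1 + u⁻¹ • P)
    (κ : Matrix (Fin n) (Fin n) ℂ) (hκ : κ * κ = 0)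
    (K : ℂ → Matrix (Fin n) (Fin n) ℂ)
    (hK : ∀ u : ℂ, K u = κ + u⁻¹ • (1 : Matrix (Fin n) (Fin n) ℂ)) :
    ∀ u v : ℂ, u ≠ 0 → v ≠ 0 → u - v ≠ 0 → u + v ≠ 0 →
      R (u - v) * (K u ⊗ₖ (1 : Matrix (Fin n) (Fin n) ℂ)) * R (u + v) *
          ((1 : Matrix (Fin n) (Fin n) ℂ) ⊗ₖ K v) =
        ((1 : Matrix (Fin n) (Fin n) ℂ) ⊗ₖ K v) * R (u + v) *
          (K u ⊗ₖ (1 : Matrix (Fin n) (Fin n) ℂ)) * R (u - v) :=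
  stmt_16_general n P hP R hR κ hκ K hK
end

section
/- Let n, k be integers with 0 < 2k < n. In gl(n,ℂ) define the subspaces 𝔥₂ := span{E_{2a−1,2b} : 1 ≤ a,b ≤ k}, 𝔥_D := span{H_a := E_{2a−1,2a−1} + E_{2a,2a} − (2/(n−2k))·Σ_{i=2k+1}^{n} E_{i,i} : 1 ≤ a ≤ k}, 𝔥₊ := span{E_{2a−1,i} : 1 ≤ a ≤ k, 2k+1 ≤ i ≤ n}, 𝔥₋ := span{E_{i,2a} : 1 ≤ a ≤ k, 2k+1 ≤ i ≤ n}. Then: [𝔥₂,𝔥₂] = [𝔥₂,𝔥₊] = [𝔥₂,𝔥₋] = [𝔥_D,𝔥_D] = [𝔥₊,𝔥₊] = [𝔥₋,𝔥₋] = 0; [𝔥_D,𝔥₂] ⊆ 𝔥₂; [𝔥_D,𝔥₊] ⊆ 𝔥₊; [𝔥_D,𝔥₋] ⊆ 𝔥₋; [𝔥₊,𝔥₋] ⊆ 𝔥₂. Consequently 𝔥_s := 𝔥₂ + 𝔥_D + 𝔥₊ + 𝔥₋ is a Lie subalgebra of gl(n,ℂ) with [𝔥_s,𝔥_s] ⊆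 𝔥₂ + 𝔥₊ + 𝔥₋ and [[𝔥_s,𝔥_s],[𝔥_s,𝔥_s]] ⊆ 𝔥₂ abelian; in particular 𝔥_s is solvable. -/
/-!
Write `R0`, `C1`, `T` for the (0-based) row indices `i < 2k` even, the column indices `j < 2k`
odd, and the indices `≥ 2k`. Then `𝔥₂`, `𝔥₊`, `𝔥₋` are spanned by the `E i j` with `(i, j)` in
`R0 × C1`, `R0 × T`, `T × C1`, and `𝔥_D` consists of diagonal matrices. Since
`⁅E i j, E p q⁆ = δ j p • E i q - δ q i • E p j`, disjointness of these index blocks makes each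
bracket vanish or land in `𝔥₂`, and a diagonal matrix acts on `E i j` by a scalar. Ordering the
blocks `R0 < T < C1`, `K = 𝔥₂ + 𝔥₊ + 𝔥₋` is strictly block upper triangular, so
`𝔥_s = 𝔥_D + K ⊇ K ⊇ 𝔥₂ ⊇ 0` bounds the derived series of `𝔥_s`.
-/

attribute [local instance] LieRing.ofAssociativeRing

section LieBrackets

variable {R L : Type*} [CommRing R] [LieRing L] [LieAlgebra R L]

theorem lie_mem_of_mem_span {s t : Set L} {r : Submodule R L}
    (h : ∀ x ∈ s, ∀ y ∈ t, ⁅x, y⁆ ∈ r) :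
    ∀ x ∈ Submodule.span R s, ∀ y ∈ Submodule.span R t, ⁅x, y⁆ ∈ r := fun x hx y hy =>
  LinearMap.BilinMap.apply_apply_mem_of_mem_span r s t
    (LieModule.toEnd R L L : L →ₗ[R] Module.End R L) h x y hx hy

variable {p p' q q' r : Submodule R L}

theorem lie_mem_sup_left (h : ∀ x ∈ p, ∀ y ∈ q, ⁅x, y⁆ ∈ r) (h' : ∀ x ∈ p', ∀ y ∈ q, ⁅x, y⁆ ∈ r) :
    ∀ x ∈ p ⊔ p', ∀ y ∈ q, ⁅x, y⁆ ∈ r := by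
  intro x hx y hy
  obtain ⟨a, ha, b, hb, rfl⟩ := Submodule.mem_sup.mp hx
  rw [add_lie]
  exact r.add_mem (h a ha y hy) (h' b hb y hy)

theorem lie_mem_sup_right (h : ∀ x ∈ p, ∀ y ∈ q, ⁅x, y⁆ ∈ r) (h' : ∀ x ∈ p, ∀ y ∈ q', ⁅x, y⁆ ∈ r) :
    ∀ x ∈ p, ∀ y ∈ q ⊔ q', ⁅x, y⁆ ∈ r := by
  intro x hx y hy
  obtain ⟨a, ha, b, hb, rfl⟩ := Submodule.mem_sup.mp hy
  rw [lie_add]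
  exact r.add_mem (h x hx a ha) (h' x hx b hb)

theorem lie_mem_swap (h : ∀ x ∈ p, ∀ y ∈ q, ⁅x, y⁆ ∈ r) : ∀ y ∈ q, ∀ x ∈ p, ⁅y, x⁆ ∈ r :=
  fun y hy x hx => by
    rw [← lie_skew]
    exact neg_mem (h x hx y hy)

theorem lie_mem_of_lie_eq_zero (h : ∀ x ∈ p, ∀ y ∈ q, ⁅x, y⁆ = 0) :
    ∀ x ∈ p, ∀ y ∈ q, ⁅x, y⁆ ∈ r :=
  fun x hx y hy => h x hx y hy ▸ r.zero_mem

theorem lie_mem_sup_of_lie_mem (h : ∀ x ∈ r, ∀ y ∈ p, ⁅x, y⁆ ∈ p)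
    (h' : ∀ x ∈ r, ∀ y ∈ q, ⁅x, y⁆ ∈ q) : ∀ x ∈ r, ∀ y ∈ p ⊔ q, ⁅x, y⁆ ∈ p ⊔ q :=
  lie_mem_sup_right (fun x hx y hy => Submodule.mem_sup_left (h x hx y hy))
    (fun x hx y hy => Submodule.mem_sup_right (h' x hx y hy))

theorem lie_mem_sup_self (hp : ∀ x ∈ p, ∀ y ∈ p, ⁅x, y⁆ ∈ r) (hpq : ∀ x ∈ p, ∀ y ∈ q, ⁅x, y⁆ ∈ r)
    (hq : ∀ x ∈ q, ∀ y ∈ q, ⁅x, y⁆ ∈ r) : ∀ x ∈ p ⊔ q, ∀ y ∈ p ⊔ q, ⁅x, y⁆ ∈ r :=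
  lie_mem_sup_left (lie_mem_sup_right hp hpq) (lie_mem_sup_right (lie_mem_swap hpq) hq)

theorem LieSubalgebra.isSolvable_of_lie_mem (S : LieSubalgebra R L) (K : ℕ → Submodule R L)
    (hS : S.toSubmodule ≤ K 0) (hK : ∀ i, ∀ x ∈ K i, ∀ y ∈ K i, ⁅x, y⁆ ∈ K (i + 1))
    {m : ℕ} (hm : K m = ⊥) : LieAlgebra.IsSolvable S := by
  have key : ∀ i, ∀ x ∈ LieAlgebra.derivedSeries R S i, (x : L) ∈ K i := by
    intro i
    induction i with
    | zero => exact fun x _ => hS x.2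
    | succ i ih =>
      intro x hx
      rw [LieAlgebra.derivedSeries_def, LieAlgebra.derivedSeriesOfIdeal_succ,
        ← LieSubmodule.mem_toSubmodule, LieSubmodule.lieIdeal_oper_eq_linear_span'] at hx
      refine Submodule.span_le (p := (K (i + 1)).comap (S.incl : S →ₗ[R] L)) |>.mpr ?_ hx
      rintro _ ⟨y, hy, z, hz, rfl⟩
      exact hK i _ (ih y hy) _ (ih z hz)
  refine (LieAlgebra.isSolvable_iff R S).mpr ⟨m, _root_.eq_bot_iff.mpr fun x hx => ?_⟩
  have := key m x hx
  rw [hm, Submodule.mem_bot] at this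
  exact (LieSubmodule.mem_bot x).mpr (Subtype.ext this)

end LieBrackets

namespace Matrix

variable {m R : Type*} [Fintype m] [DecidableEq m] [CommRing R]

variable (R) in
def singleSpan (A B : Set m) : Submodule R (Matrix m m R) :=
  Submodule.span R (Set.image2 (fun i j => single i j 1) A B)

theorem single_lie_single_of_ne {i j p q : m} (h : q ≠ i) :
    ⁅single i j (1 : R), single p q 1⁆ = (if j = p then single i q 1 else 0 : Matrix m m R) := by
  split_ifs with hjp
  · subst hjp
    simp [Ring.lie_def, h]
  · simp [Ring.lie_def, h, hjp]

theorem diagonal_lie_single (d : m → R) (i j : m) (c : R) :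
    ⁅diagonal d, single i j c⁆ = (d i - d j) • single i j c := by
  ext a b
  by_cases h : i = a ∧ j = b
  · obtain ⟨rfl, rfl⟩ := h
    simp [Ring.lie_def]
    ring
  · simp [Ring.lie_def, single, h]

variable {A B C D : Set m}

theorem singleSpan_lie_mem (hDA : Disjoint D A) :
    ∀ x ∈ singleSpan R A B, ∀ y ∈ singleSpan R C D, ⁅x, y⁆ ∈ singleSpan R A D := by
  refine lie_mem_of_mem_span ?_
  rintro _ ⟨i, hi, j, -, rfl⟩ _ ⟨p, -, q, hq, rfl⟩
  rw [single_lie_single_of_ne (hDA.ne_of_mem hq hi)]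
  split_ifs
  · exact Submodule.subset_span ⟨i, hi, q, hq, rfl⟩
  · exact zero_mem _

theorem singleSpan_lie_eq_zero (hBC : Disjoint B C) (hDA : Disjoint D A) :
    ∀ x ∈ singleSpan R A B, ∀ y ∈ singleSpan R C D, ⁅x, y⁆ = 0 := by
  suffices ∀ x ∈ singleSpan R A B, ∀ y ∈ singleSpan R C D, ⁅x, y⁆ ∈ (⊥ : Submodule R _) from
    fun x hx y hy => (Submodule.mem_bot R).mp (this x hx y hy)
  refine lie_mem_of_mem_span ?_
  rintro _ ⟨i, hi, j, hj, rfl⟩ _ ⟨p, hp, q, hq, rfl⟩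
  rw [single_lie_single_of_ne (hDA.ne_of_mem hq hi), if_neg (hBC.ne_of_mem hj hp)]
  exact zero_mem _

theorem diagonal_lie_diagonal_eq_zero :
    ∀ x ∈ LinearMap.range (diagonalLinearMap m R R),
      ∀ y ∈ LinearMap.range (diagonalLinearMap m R R), ⁅x, y⁆ = 0 := by
  rintro _ ⟨d, rfl⟩ _ ⟨e, rfl⟩
  exact commute_iff_lie_eq.mp (commute_diagonal d e)

theorem diagonal_lie_mem_singleSpan :
    ∀ x ∈ LinearMap.range (diagonalLinearMap m R R),
      ∀ y ∈ singleSpan R A B, ⁅x, y⁆ ∈ singleSpan R A B := by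
  rintro _ ⟨d, rfl⟩
  refine lie_mem_of_mem_span (s := {diagonal d}) ?_ _ (Submodule.mem_span_singleton_self _)
  rintro _ rfl _ ⟨i, hi, j, hj, rfl⟩
  rw [diagonal_lie_single]
  exact Submodule.smul_mem _ _ (Submodule.subset_span ⟨i, hi, j, hj, rfl⟩)

end Matrix

open Matrix

theorem stmt_17_general (n k : ℕ)
    (E : Fin n → Fin n → Matrix (Fin n) (Fin n) ℂ)
    (hE : ∀ i j, E i j = Matrix.single i j 1)
    (h₂ hD hplus hminus : Submodule ℂ (Matrix (Fin n) (Fin n) ℂ))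
    (hh₂ : h₂ = Submodule.span ℂ
      {M | ∃ i j : Fin n, (i : ℕ) < 2 * k ∧ Even (i : ℕ) ∧ (j : ℕ) < 2 * k ∧ Odd (j : ℕ) ∧
        M = E i j})
    (hhD : hD = Submodule.span ℂ
      {M | ∃ i j : Fin n, (i : ℕ) < 2 * k ∧ Even (i : ℕ) ∧ (j : ℕ) = (i : ℕ) + 1 ∧
        M = E i i + E j j -
          ((2 : ℂ) / ((n : ℂ) - 2 * k)) • ∑ l : Fin n, if 2 * k ≤ (l : ℕ) then E l l else 0})
    (hhplus : hplus = Submodule.span ℂ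
      {M | ∃ i j : Fin n, (i : ℕ) < 2 * k ∧ Even (i : ℕ) ∧ 2 * k ≤ (j : ℕ) ∧ M = E i j})
    (hhminus : hminus = Submodule.span ℂ
      {M | ∃ i j : Fin n, 2 * k ≤ (i : ℕ) ∧ (j : ℕ) < 2 * k ∧ Odd (j : ℕ) ∧ M = E i j}) :
    (∀ x ∈ h₂, ∀ y ∈ h₂, ⁅x, y⁆ = (0 : Matrix (Fin n) (Fin n) ℂ)) ∧
    (∀ x ∈ h₂, ∀ y ∈ hplus, ⁅x, y⁆ = (0 : Matrix (Fin n) (Fin n) ℂ)) ∧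
    (∀ x ∈ h₂, ∀ y ∈ hminus, ⁅x, y⁆ = (0 : Matrix (Fin n) (Fin n) ℂ)) ∧
    (∀ x ∈ hD, ∀ y ∈ hD, ⁅x, y⁆ = (0 : Matrix (Fin n) (Fin n) ℂ)) ∧
    (∀ x ∈ hplus, ∀ y ∈ hplus, ⁅x, y⁆ = (0 : Matrix (Fin n) (Fin n) ℂ)) ∧
    (∀ x ∈ hminus, ∀ y ∈ hminus, ⁅x, y⁆ = (0 : Matrix (Fin n) (Fin n) ℂ)) ∧
    (∀ x ∈ hD, ∀ y ∈ h₂, ⁅x, y⁆ ∈ h₂) ∧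
    (∀ x ∈ hD, ∀ y ∈ hplus, ⁅x, y⁆ ∈ hplus) ∧
    (∀ x ∈ hD, ∀ y ∈ hminus, ⁅x, y⁆ ∈ hminus) ∧
    (∀ x ∈ hplus, ∀ y ∈ hminus, ⁅x, y⁆ ∈ h₂) ∧
    (∀ x ∈ h₂ ⊔ hD ⊔ hplus ⊔ hminus, ∀ y ∈ h₂ ⊔ hD ⊔ hplus ⊔ hminus,
      ⁅x, y⁆ ∈ h₂ ⊔ hplus ⊔ hminus) ∧
    (∀ x ∈ h₂ ⊔ hD ⊔ hplus ⊔ hminus, ∀ y ∈ h₂ ⊔ hD ⊔ hplus ⊔ hminus,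
      ∀ z ∈ h₂ ⊔ hD ⊔ hplus ⊔ hminus, ∀ w ∈ h₂ ⊔ hD ⊔ hplus ⊔ hminus,
        ⁅⁅x, y⁆, ⁅z, w⁆⁆ ∈ h₂) ∧
    (∃ S : LieSubalgebra ℂ (Matrix (Fin n) (Fin n) ℂ),
      S.toSubmodule = h₂ ⊔ hD ⊔ hplus ⊔ hminus ∧ LieAlgebra.IsSolvable S) := by
  set R0 : Set (Fin n) := {i | (i : ℕ) < 2 * k ∧ Even (i : ℕ)}
  set C1 : Set (Fin n) := {j | (j : ℕ) < 2 * k ∧ Odd (j : ℕ)}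
  set T : Set (Fin n) := {i | 2 * k ≤ (i : ℕ)}
  have hR0C1 : Disjoint R0 C1 := Set.disjoint_left.mpr fun i hi hi' =>
    Nat.not_even_iff_odd.mpr hi'.2 hi.2
  have hTR0 : Disjoint T R0 := Set.disjoint_left.mpr fun i hi hi' => by
    simp_all [T, R0]; omega
  have hTC1 : Disjoint T C1 := Set.disjoint_left.mpr fun i hi hi' => by
    simp_all [T, C1]; omega
  have h₂_eq : h₂ = singleSpan ℂ R0 C1 := by
    rw [hh₂, singleSpan]; congr 1; ext M; simp [hE, R0, C1, and_assoc, eq_comm]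
  have hplus_eq : hplus = singleSpan ℂ R0 T := by
    rw [hhplus, singleSpan]; congr 1; ext M; simp [hE, R0, T, and_assoc, eq_comm]
  have hminus_eq : hminus = singleSpan ℂ T C1 := by
    rw [hhminus, singleSpan]; congr 1; ext M; simp [hE, T, C1, and_assoc, eq_comm]
  have hD_le : hD ≤ LinearMap.range (diagonalLinearMap (Fin n) ℂ ℂ) := by
    have hEdiag : ∀ l, E l l ∈ LinearMap.range (diagonalLinearMap (Fin n) ℂ ℂ) :=
      fun l => ⟨Pi.single l 1, by simp [hE, diagonal_single]⟩
    rw [hhD, Submodule.span_le]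
    rintro _ ⟨i, j, -, -, -, rfl⟩
    refine sub_mem (add_mem (hEdiag i) (hEdiag j)) (Submodule.smul_mem _ _ (sum_mem fun l _ => ?_))
    split_ifs
    exacts [hEdiag l, zero_mem _]
  subst h₂_eq hplus_eq hminus_eq
  have h22 := singleSpan_lie_eq_zero (R := ℂ) hR0C1.symm hR0C1.symm
  have h2p := singleSpan_lie_eq_zero (R := ℂ) hR0C1.symm hTR0
  have h2m := singleSpan_lie_eq_zero (R := ℂ) hTC1.symm hR0C1.symm
  have hpp := singleSpan_lie_eq_zero (R := ℂ) hTR0 hTR0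
  have hmm := singleSpan_lie_eq_zero (R := ℂ) hTC1.symm hTC1.symm
  have hpm := singleSpan_lie_mem (R := ℂ) (B := T) (C := T) hR0C1.symm
  have hDD : ∀ x ∈ hD, ∀ y ∈ hD, ⁅x, y⁆ = 0 :=
    fun x hx y hy => diagonal_lie_diagonal_eq_zero x (hD_le hx) y (hD_le hy)
  have hD_lie {A B : Set (Fin n)} : ∀ x ∈ hD, ∀ y ∈ singleSpan ℂ A B, ⁅x, y⁆ ∈ singleSpan ℂ A B :=
    fun x hx => diagonal_lie_mem_singleSpan x (hD_le hx)
  have hKK := lie_mem_sup_self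
    (lie_mem_sup_self (lie_mem_of_lie_eq_zero h22) (lie_mem_of_lie_eq_zero h2p)
      (lie_mem_of_lie_eq_zero hpp))
    (lie_mem_sup_left (lie_mem_of_lie_eq_zero h2m) hpm) (lie_mem_of_lie_eq_zero hmm)
  set hs := singleSpan ℂ R0 C1 ⊔ hD ⊔ singleSpan ℂ R0 T ⊔ singleSpan ℂ T C1 with hs_def
  set K := singleSpan ℂ R0 C1 ⊔ singleSpan ℂ R0 T ⊔ singleSpan ℂ T C1
  have hK_le : K ≤ hs := sup_le_sup_right (sup_le_sup_right le_sup_left _) _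
  have hsK : ∀ x ∈ hs, ∀ y ∈ hs, ⁅x, y⁆ ∈ K := by
    rw [hs_def, sup_right_comm _ hD, sup_right_comm _ hD, sup_comm _ hD]
    exact lie_mem_sup_self (lie_mem_of_lie_eq_zero hDD)
      (lie_mem_sup_of_lie_mem (lie_mem_sup_of_lie_mem hD_lie hD_lie) hD_lie)
      fun x hx y hy => Submodule.mem_sup_left (Submodule.mem_sup_left (hKK x hx y hy))
  refine ⟨h22, h2p, h2m, hDD, hpp, hmm, hD_lie, hD_lie, hD_lie, hpm, hsK,
    fun x hx y hy z hz w hw => hKK _ (hsK x hx y hy) _ (hsK z hz w hw),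
    ⟨{ toSubmodule := hs, lie_mem' := fun hx hy => hK_le (hsK _ hx _ hy) }, rfl, ?_⟩⟩
  refine LieSubalgebra.isSolvable_of_lie_mem _ (fun i => [hs, K, singleSpan ℂ R0 C1].getD i ⊥)
    le_rfl ?_ (m := 3) rfl
  rintro (_ | _ | _ | i)
  exacts [hsK, hKK, lie_mem_of_lie_eq_zero h22, by simp]

/-- the decomposition `𝔥_s = 𝔥₂ + 𝔥_D + 𝔥₊ + 𝔥₋` in `gl(n, ℂ)` (elementary
matrices are indexed here 0-based: 1-based row `2a−1` is 0-based even `< 2k`, 1-based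
column `2b` is 0-based odd `< 2k`, and 1-based `2k+1 ≤ i ≤ n` is 0-based `2k ≤ i`):
all the stated bracket relations hold, `𝔥₂` is abelian, and `𝔥_s` is a solvable Lie
subalgebra of `gl(n, ℂ)`. -/
theorem stmt_17 (n k : ℕ) (hk : 0 < k) (hkn : 2 * k < n)
    (E : Fin n → Fin n → Matrix (Fin n) (Fin n) ℂ)
    (hE : ∀ i j, E i j = Matrix.single i j 1)
    (h₂ hD hplus hminus : Submodule ℂ (Matrix (Fin n) (Fin n) ℂ))
    (hh₂ : h₂ = Submodule.span ℂ
      {M | ∃ i j : Fin n, (i : ℕ) < 2 * k ∧ Even (i : ℕ) ∧ (j : ℕ) < 2 * k ∧ Odd (j : ℕ) ∧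
        M = E i j})
    (hhD : hD = Submodule.span ℂ
      {M | ∃ i j : Fin n, (i : ℕ) < 2 * k ∧ Even (i : ℕ) ∧ (j : ℕ) = (i : ℕ) + 1 ∧
        M = E i i + E j j -
          ((2 : ℂ) / ((n : ℂ) - 2 * k)) • ∑ l : Fin n, if 2 * k ≤ (l : ℕ) then E l l else 0})
    (hhplus : hplus = Submodule.span ℂ
      {M | ∃ i j : Fin n, (i : ℕ) < 2 * k ∧ Even (i : ℕ) ∧ 2 * k ≤ (j : ℕ) ∧ M = E i j})
    (hhminus : hminus = Submodule.span ℂ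
      {M | ∃ i j : Fin n, 2 * k ≤ (i : ℕ) ∧ (j : ℕ) < 2 * k ∧ Odd (j : ℕ) ∧ M = E i j}) :
    (∀ x ∈ h₂, ∀ y ∈ h₂, ⁅x, y⁆ = (0 : Matrix (Fin n) (Fin n) ℂ)) ∧
    (∀ x ∈ h₂, ∀ y ∈ hplus, ⁅x, y⁆ = (0 : Matrix (Fin n) (Fin n) ℂ)) ∧
    (∀ x ∈ h₂, ∀ y ∈ hminus, ⁅x, y⁆ = (0 : Matrix (Fin n) (Fin n) ℂ)) ∧
    (∀ x ∈ hD, ∀ y ∈ hD, ⁅x, y⁆ = (0 : Matrix (Fin n) (Fin n) ℂ)) ∧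
    (∀ x ∈ hplus, ∀ y ∈ hplus, ⁅x, y⁆ = (0 : Matrix (Fin n) (Fin n) ℂ)) ∧
    (∀ x ∈ hminus, ∀ y ∈ hminus, ⁅x, y⁆ = (0 : Matrix (Fin n) (Fin n) ℂ)) ∧
    (∀ x ∈ hD, ∀ y ∈ h₂, ⁅x, y⁆ ∈ h₂) ∧
    (∀ x ∈ hD, ∀ y ∈ hplus, ⁅x, y⁆ ∈ hplus) ∧
    (∀ x ∈ hD, ∀ y ∈ hminus, ⁅x, y⁆ ∈ hminus) ∧
    (∀ x ∈ hplus, ∀ y ∈ hminus, ⁅x, y⁆ ∈ h₂) ∧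
    (∀ x ∈ h₂ ⊔ hD ⊔ hplus ⊔ hminus, ∀ y ∈ h₂ ⊔ hD ⊔ hplus ⊔ hminus,
      ⁅x, y⁆ ∈ h₂ ⊔ hplus ⊔ hminus) ∧
    (∀ x ∈ h₂ ⊔ hD ⊔ hplus ⊔ hminus, ∀ y ∈ h₂ ⊔ hD ⊔ hplus ⊔ hminus,
      ∀ z ∈ h₂ ⊔ hD ⊔ hplus ⊔ hminus, ∀ w ∈ h₂ ⊔ hD ⊔ hplus ⊔ hminus,
        ⁅⁅x, y⁆, ⁅z, w⁆⁆ ∈ h₂) ∧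
    (∃ S : LieSubalgebra ℂ (Matrix (Fin n) (Fin n) ℂ),
      S.toSubmodule = h₂ ⊔ hD ⊔ hplus ⊔ hminus ∧ LieAlgebra.IsSolvable S) :=
  stmt_17_general n k E hE h₂ hD hplus hminus hh₂ hhD hhplus hhminus
end
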